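/- arXiv:math/9805116 — 3 statements merged into one kernel-verified Lean document; each statement's English description precedes it below -/
import Mathlib

section
/- Let A be a weak Hopf algebra over a field K and let M be a right weak Hopf module over A with coaction ρ(m) = Σ m₀ ⊗ m₁. Then: (i) Σ m₀ · Π^R(m₁) = m for all m ∈ M; (ii) the coinvariants satisfy Coinv M = { m ∈ M | ρ(m) = Σ m·1₍₁₎ ⊗ 1₍₂₎ }; (iii) the K-linear map E : M → M, E(m) := Σ m₀ · S(m₁), satisfies E ∘ E = E and its range equals Coinv M. -/
open TensorProduct

noncomputable section

variable (K : Type*) [Field K] (A : Type*) [Ring A] [Algebra K A]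

/-- `Π^L(x) = Σ ε(1₍₁₎ x) 1₍₂₎`. -/
def piL (Δ : A →ₗ[K] A ⊗[K] A) (ε : A →ₗ[K] K) : A →ₗ[K] A :=
  (TensorProduct.lid K A).toLinearMap ∘ₗ ε.rTensor A ∘ₗ
    LinearMap.mulLeft K (Δ 1) ∘ₗ (TensorProduct.mk K A A).flip 1

/-- `Π^R(x) = Σ 1₍₁₎ ε(x 1₍₂₎)`. -/
def piR (Δ : A →ₗ[K] A ⊗[K] A) (ε : A →ₗ[K] K) : A →ₗ[K] A :=
  (TensorProduct.rid K A).toLinearMap ∘ₗ ε.lTensor A ∘ₗ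
    LinearMap.mulRight K (Δ 1) ∘ₗ TensorProduct.mk K A A 1

/-- A weak bialgebra structure on the `K`-algebra `A`, with comultiplication `Δ`
and counit `ε`. -/
structure WeakBialgebra (Δ : A →ₗ[K] A ⊗[K] A) (ε : A →ₗ[K] K) : Prop where
  coassoc : ∀ x : A,
    (TensorProduct.assoc K A A A) (Δ.rTensor A (Δ x)) = Δ.lTensor A (Δ x)
  counit_left : ∀ x : A, (TensorProduct.lid K A) (ε.rTensor A (Δ x)) = x
  counit_right : ∀ x : A, (TensorProduct.rid K A) (ε.lTensor A (Δ x)) = x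
  comul_mul : ∀ x y : A, Δ (x * y) = Δ x * Δ y
  weak_counit_a : ∀ x y z : A,
    ε (x * y * z) =
      LinearMap.mul' K K (TensorProduct.map (ε ∘ₗ LinearMap.mulLeft K x)
        (ε ∘ₗ LinearMap.mulRight K z) (Δ y))
  weak_counit_b : ∀ x y z : A,
    ε (x * y * z) =
      LinearMap.mul' K K (TensorProduct.map (ε ∘ₗ LinearMap.mulRight K z)
        (ε ∘ₗ LinearMap.mulLeft K x) (Δ y))
  weak_comul_unit_a :
    Δ.rTensor A (Δ 1) =
      (Δ 1 ⊗ₜ[K] (1 : A)) * ((TensorProduct.assoc K A A A).symm ((1 : A) ⊗ₜ[K] Δ 1))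
  weak_comul_unit_b :
    Δ.rTensor A (Δ 1) =
      ((TensorProduct.assoc K A A A).symm ((1 : A) ⊗ₜ[K] Δ 1)) * (Δ 1 ⊗ₜ[K] (1 : A))

/-- A weak Hopf algebra structure: a weak bialgebra together with an antipode `S`. -/
structure WeakHopfAlgebra (Δ : A →ₗ[K] A ⊗[K] A) (ε : A →ₗ[K] K) (S : A →ₗ[K] A) : Prop where
  toWeakBialgebra : WeakBialgebra K A Δ ε
  antipode_a : ∀ x : A,
    LinearMap.mul' K A (LinearMap.lTensor A S (Δ x)) = piL K A Δ ε x
  antipode_b : ∀ x : A,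
    LinearMap.mul' K A (LinearMap.rTensor A S (Δ x)) = piR K A Δ ε x
  antipode_c : ∀ x : A,
    LinearMap.mul' K A (TensorProduct.map S (LinearMap.mul' K A ∘ₗ LinearMap.lTensor A S)
      (LinearMap.lTensor A Δ (Δ x))) = S x

/-- A right weak Hopf module over the weak Hopf algebra `A`: a `K`-vector space `M`
with a right `A`-action `act` (encoded as a `K`-bilinear map `M → A → M`) and a
right `A`-coaction `ρ : M → M ⊗ A` which is coassociative, counital and compatible
with the action via `ρ(m·x) = Σ m₀·x₍₁₎ ⊗ m₁ x₍₂₎`. -/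
structure RightWeakHopfModule
    (K : Type*) [Field K] (A : Type*) [Ring A] [Algebra K A]
    (Δ : A →ₗ[K] A ⊗[K] A) (ε : A →ₗ[K] K)
    (M : Type*) [AddCommGroup M] [Module K M]
    (act : M →ₗ[K] A →ₗ[K] M) (ρ : M →ₗ[K] M ⊗[K] A) : Prop where
  act_one : ∀ m : M, act m 1 = m
  act_mul : ∀ (m : M) (x y : A), act (act m x) y = act m (x * y)
  coassoc : ∀ m : M,
    (TensorProduct.assoc K M A A) (ρ.rTensor A (ρ m)) = LinearMap.lTensor M Δ (ρ m)
  counital : ∀ m : M, (TensorProduct.rid K M) (ε.lTensor M (ρ m)) = m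
  compat : ∀ (m : M) (x : A),
    ρ (act m x) = TensorProduct.map₂ act (LinearMap.mul K A) (ρ m) (Δ x)
section WHAAux
set_option maxHeartbeats 1000000

open LinearMap

variable {K : Type*} [Field K] {A : Type*} [Ring A] [Algebra K A]
variable (Δ : A →ₗ[K] A ⊗[K] A) (ε : A →ₗ[K] K)

theorem WHA.assoc_mul (w₁ w₂ : (A ⊗[K] A) ⊗[K] A) :
    (TensorProduct.assoc K A A A) (w₁ * w₂) =
      (TensorProduct.assoc K A A A) w₁ * (TensorProduct.assoc K A A A) w₂ := by
  have h : ∀ w : (A ⊗[K] A) ⊗[K] A,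
      (TensorProduct.assoc K A A A) w = Algebra.TensorProduct.assoc K K K A A A w := by
    intro w
    induction w using TensorProduct.induction_on with
    | zero => simp
    | tmul a b =>
      induction a using TensorProduct.induction_on with
      | zero => simp
      | tmul x y => rfl
      | add u v hu hv => simp only [TensorProduct.add_tmul, map_add, hu, hv]
    | add u v hu hv => simp only [map_add, hu, hv]
  rw [h, h, h, map_mul]

theorem WHA.rT_mul (h : ∀ x y : A, Δ (x*y) = Δ x * Δ y) (w₁ w₂ : A ⊗[K] A) :
    Δ.rTensor A (w₁ * w₂) = Δ.rTensor A w₁ * Δ.rTensor A w₂ := by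
  induction w₁ using TensorProduct.induction_on with
  | zero => simp
  | tmul a b =>
    induction w₂ using TensorProduct.induction_on with
    | zero => simp
    | tmul c d => simp [Algebra.TensorProduct.tmul_mul_tmul, h]
    | add u v hu hv => simp [mul_add, hu, hv]
  | add u v hu hv => simp [add_mul, hu, hv]

theorem WHA.lT_mul (h : ∀ x y : A, Δ (x*y) = Δ x * Δ y) (w₁ w₂ : A ⊗[K] A) :
    Δ.lTensor A (w₁ * w₂) = Δ.lTensor A w₁ * Δ.lTensor A w₂ := by
  induction w₁ using TensorProduct.induction_on with
  | zero => simp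
  | tmul a b =>
    induction w₂ using TensorProduct.induction_on with
    | zero => simp
    | tmul c d => simp [Algebra.TensorProduct.tmul_mul_tmul, h]
    | add u v hu hv => simp [mul_add, hu, hv]
  | add u v hu hv => simp [add_mul, hu, hv]

theorem WHA.piL_rep {t : Finset (A × A)} (ht : Δ 1 = ∑ p ∈ t, p.1 ⊗ₜ[K] p.2) (x : A) :
    piL K A Δ ε x = ∑ p ∈ t, ε (p.1 * x) • p.2 := by
  simp only [piL, LinearMap.comp_apply, LinearMap.flip_apply, TensorProduct.mk_apply,
    LinearMap.mulLeft_apply, ht, Finset.sum_mul, Algebra.TensorProduct.tmul_mul_tmul, mul_one,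
    map_sum, LinearMap.rTensor_tmul, LinearEquiv.coe_coe, TensorProduct.lid_tmul]

theorem WHA.piR_rep {t : Finset (A × A)} (ht : Δ 1 = ∑ p ∈ t, p.1 ⊗ₜ[K] p.2) (x : A) :
    piR K A Δ ε x = ∑ p ∈ t, ε (x * p.2) • p.1 := by
  simp only [piR, LinearMap.comp_apply, TensorProduct.mk_apply,
    LinearMap.mulRight_apply, ht, Finset.mul_sum, Algebra.TensorProduct.tmul_mul_tmul, one_mul,
    map_sum, LinearMap.lTensor_tmul, LinearEquiv.coe_coe, TensorProduct.rid_tmul]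

end WHAAux

/-- Convolution product on `Hom(A, B)`. -/
noncomputable def WHA.conv {K : Type*} [Field K] {A : Type*} [Ring A] [Algebra K A]
    (Δ : A →ₗ[K] A ⊗[K] A) {B : Type*} [Ring B] [Algebra K B] (f g : A →ₗ[K] B) : A →ₗ[K] B :=
  LinearMap.mul' K B ∘ₗ TensorProduct.map f g ∘ₗ Δ

section WHAAux2
set_option maxHeartbeats 1000000

open LinearMap WHA

variable {K : Type*} [Field K] {A : Type*} [Ring A] [Algebra K A]
variable (Δ : A →ₗ[K] A ⊗[K] A) (ε : A →ₗ[K] K)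

theorem WHA.conv_apply {B : Type*} [Ring B] [Algebra K B] (f g : A →ₗ[K] B) (x : A) :
    conv Δ f g x = LinearMap.mul' K B (TensorProduct.map f g (Δ x)) := rfl

theorem WHA.conv_rep {B : Type*} [Ring B] [Algebra K B] (f g : A →ₗ[K] B) (x : A)
    {s : Finset (A × A)} (hs : Δ x = ∑ p ∈ s, p.1 ⊗ₜ[K] p.2) :
    conv Δ f g x = ∑ p ∈ s, f p.1 * g p.2 := by
  simp [conv, hs, LinearMap.mul'_apply]

theorem WHA.conv_assoc
    (hco : ∀ x : A, (TensorProduct.assoc K A A A) (Δ.rTensor A (Δ x)) = Δ.lTensor A (Δ x))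
    {B : Type*} [Ring B] [Algebra K B] (f g h : A →ₗ[K] B) :
    conv Δ (conv Δ f g) h = conv Δ f (conv Δ g h) := by
  ext x
  obtain ⟨s, hs⟩ := TensorProduct.exists_finset (Δ x)
  have key : (LinearMap.mul' K B ∘ₗ TensorProduct.map f (LinearMap.mul' K B ∘ₗ TensorProduct.map g h))
        ∘ₗ (TensorProduct.assoc K A A A).toLinearMap
      = LinearMap.mul' K B ∘ₗ TensorProduct.map (LinearMap.mul' K B ∘ₗ TensorProduct.map f g) h := by
    apply TensorProduct.ext_threefold
    intro a b c
    simp [LinearMap.mul'_apply, mul_assoc]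
  have h1 := congrArg (LinearMap.mul' K B ∘ₗ TensorProduct.map f
      (LinearMap.mul' K B ∘ₗ TensorProduct.map g h)) (hco x)
  have h2 := LinearMap.congr_fun key (Δ.rTensor A (Δ x))
  simp only [LinearMap.comp_apply, LinearEquiv.coe_coe] at h1 h2
  rw [h2] at h1
  calc conv Δ (conv Δ f g) h x
      = (LinearMap.mul' K B) ((TensorProduct.map (LinearMap.mul' K B ∘ₗ TensorProduct.map f g) h)
          (Δ.rTensor A (Δ x))) := by
        rw [conv_rep Δ _ h x hs, hs]
        simp [conv, LinearMap.mul'_apply]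
    _ = (LinearMap.mul' K B) ((TensorProduct.map f (LinearMap.mul' K B ∘ₗ TensorProduct.map g h))
          (Δ.lTensor A (Δ x))) := h1
    _ = conv Δ f (conv Δ g h) x := by
        rw [conv_rep Δ f _ x hs, hs]
        simp [conv, LinearMap.mul'_apply]

end WHAAux2

section WHAAux3
set_option maxHeartbeats 2000000

open LinearMap WHA

variable {K : Type*} [Field K] {A : Type*} [Ring A] [Algebra K A]
variable (Δ : A →ₗ[K] A ⊗[K] A) (ε : A →ₗ[K] K)

theorem WHA.Dabs_l (hW : WeakBialgebra K A Δ ε) (x : A) : Δ 1 * Δ x = Δ x := by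
  have := hW.comul_mul 1 x; rw [one_mul] at this; exact this.symm

theorem WHA.Dabs_r (hW : WeakBialgebra K A Δ ε) (x : A) : Δ x * Δ 1 = Δ x := by
  have := hW.comul_mul x 1; rw [mul_one] at this; exact this.symm

theorem WHA.rT_counit (hW : WeakBialgebra K A Δ ε) (w : A ⊗[K] A) :
    ((TensorProduct.rid K A).toLinearMap ∘ₗ ε.lTensor A).rTensor A (Δ.rTensor A w) = w := by
  rw [← LinearMap.comp_apply, ← LinearMap.rTensor_comp]
  have hid : ((TensorProduct.rid K A).toLinearMap ∘ₗ ε.lTensor A) ∘ₗ Δ = LinearMap.id := by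
    ext y; simpa using hW.counit_right y
  rw [hid, LinearMap.rTensor_id, LinearMap.id_apply]

theorem WHA.lT_counit (hW : WeakBialgebra K A Δ ε) (w : A ⊗[K] A) :
    ((TensorProduct.lid K A).toLinearMap ∘ₗ ε.rTensor A).lTensor A (Δ.lTensor A w) = w := by
  rw [← LinearMap.comp_apply, ← LinearMap.lTensor_comp]
  have hid : ((TensorProduct.lid K A).toLinearMap ∘ₗ ε.rTensor A) ∘ₗ Δ = LinearMap.id := by
    ext y; simpa using hW.counit_left y
  rw [hid, LinearMap.lTensor_id, LinearMap.id_apply]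

/-- `(id ⊗ Π^L)(Δ x) = Δ(1) (x ⊗ 1)`. -/
theorem WHA.L11 (hW : WeakBialgebra K A Δ ε) (x : A) :
    LinearMap.lTensor A (piL K A Δ ε) (Δ x) = Δ 1 * (x ⊗ₜ[K] 1) := by
  obtain ⟨t, ht⟩ := TensorProduct.exists_finset (Δ 1)
  obtain ⟨s, hs⟩ := TensorProduct.exists_finset (Δ x)
  have step1 : Δ.rTensor A (Δ 1 * (x ⊗ₜ[K] 1))
      = (TensorProduct.assoc K A A A).symm ((1:A) ⊗ₜ[K] Δ 1) * (Δ x ⊗ₜ[K] (1:A)) := by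
    rw [WHA.rT_mul Δ hW.comul_mul, hW.weak_comul_unit_b, LinearMap.rTensor_tmul, mul_assoc]
    congr 1
    rw [Algebra.TensorProduct.tmul_mul_tmul, one_mul, WHA.Dabs_l Δ ε hW]
  have h2 := congrArg (((TensorProduct.rid K A).toLinearMap ∘ₗ ε.lTensor A).rTensor A) step1
  rw [WHA.rT_counit Δ ε hW] at h2
  rw [h2, ht, hs]
  simp only [TensorProduct.tmul_sum, TensorProduct.sum_tmul, map_sum,
    TensorProduct.assoc_symm_tmul, Finset.sum_mul, Finset.mul_sum,
    Algebra.TensorProduct.tmul_mul_tmul, one_mul, mul_one, LinearMap.rTensor_tmul,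
    LinearMap.comp_apply, LinearMap.lTensor_tmul, LinearEquiv.coe_coe,
    TensorProduct.rid_tmul, TensorProduct.smul_tmul, TensorProduct.tmul_smul,
    WHA.piL_rep Δ ε ht]

/-- `(Π^R ⊗ id)(Δ x) = (1 ⊗ x) Δ(1)`. -/
theorem WHA.W9 (hW : WeakBialgebra K A Δ ε) (x : A) :
    LinearMap.rTensor A (piR K A Δ ε) (Δ x) = ((1:A) ⊗ₜ[K] x) * Δ 1 := by
  obtain ⟨t, ht⟩ := TensorProduct.exists_finset (Δ 1)
  obtain ⟨s, hs⟩ := TensorProduct.exists_finset (Δ x)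
  have step1 : Δ.lTensor A (((1:A) ⊗ₜ[K] x) * Δ 1)
      = ((1:A) ⊗ₜ[K] Δ x) * (TensorProduct.assoc K A A A) (Δ 1 ⊗ₜ[K] (1:A)) := by
    rw [WHA.lT_mul Δ hW.comul_mul, LinearMap.lTensor_tmul, ← hW.coassoc 1,
      hW.weak_comul_unit_b, WHA.assoc_mul, LinearEquiv.apply_symm_apply, ← mul_assoc,
      Algebra.TensorProduct.tmul_mul_tmul, one_mul, WHA.Dabs_r Δ ε hW]
  have h2 := congrArg (((TensorProduct.lid K A).toLinearMap ∘ₗ ε.rTensor A).lTensor A) step1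
  rw [WHA.lT_counit Δ ε hW] at h2
  rw [h2, ht, hs]
  simp only [TensorProduct.tmul_sum, TensorProduct.sum_tmul, map_sum,
    TensorProduct.assoc_tmul, Finset.sum_mul, Finset.mul_sum,
    Algebra.TensorProduct.tmul_mul_tmul, one_mul, mul_one, LinearMap.rTensor_tmul,
    LinearMap.comp_apply, LinearMap.lTensor_tmul, LinearEquiv.coe_coe,
    TensorProduct.lid_tmul, TensorProduct.smul_tmul, TensorProduct.tmul_smul,
    WHA.piR_rep Δ ε ht]
  rw [Finset.sum_comm]

end WHAAux3

section WHAAux4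
set_option maxHeartbeats 2000000
set_option synthInstance.maxHeartbeats 400000

open LinearMap WHA

variable {K : Type*} [Field K] {A : Type*} [Ring A] [Algebra K A]
variable (Δ : A →ₗ[K] A ⊗[K] A) (ε : A →ₗ[K] K)

theorem WHA.U1 (hW : WeakBialgebra K A Δ ε) :
    LinearMap.lTensor A (piL K A Δ ε) (Δ 1) = Δ 1 := by
  have h := WHA.L11 Δ ε hW 1
  rwa [← Algebra.TensorProduct.one_def, mul_one] at h

theorem WHA.lTD1_a (hW : WeakBialgebra K A Δ ε) : Δ.lTensor A (Δ 1)
    = (TensorProduct.assoc K A A A) (Δ 1 ⊗ₜ[K] (1:A)) * ((1:A) ⊗ₜ[K] Δ 1) := by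
  rw [← hW.coassoc 1, hW.weak_comul_unit_a, WHA.assoc_mul, LinearEquiv.apply_symm_apply]

theorem WHA.lTD1_b (hW : WeakBialgebra K A Δ ε) : Δ.lTensor A (Δ 1)
    = ((1:A) ⊗ₜ[K] Δ 1) * (TensorProduct.assoc K A A A) (Δ 1 ⊗ₜ[K] (1:A)) := by
  rw [← hW.coassoc 1, hW.weak_comul_unit_b, WHA.assoc_mul, LinearEquiv.apply_symm_apply]

theorem WHA.U4 (hW : WeakBialgebra K A Δ ε) (x : A) :
    Δ (piL K A Δ ε x) = (piL K A Δ ε x ⊗ₜ[K] (1:A)) * Δ 1 := by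
  obtain ⟨t, ht⟩ := TensorProduct.exists_finset (Δ 1)
  have hkey := WHA.lTD1_a Δ ε hW
  rw [ht] at hkey
  simp only [map_sum, LinearMap.lTensor_tmul, TensorProduct.sum_tmul, TensorProduct.tmul_sum,
    TensorProduct.assoc_tmul, Finset.sum_mul, Finset.mul_sum, Algebra.TensorProduct.tmul_mul_tmul,
    one_mul, mul_one] at hkey
  have h2 := congrArg ((TensorProduct.lid K (A ⊗[K] A)).toLinearMap ∘ₗ
      (ε ∘ₗ LinearMap.mulRight K x).rTensor (A ⊗[K] A)) hkey
  simp only [map_sum, LinearMap.comp_apply, LinearMap.rTensor_tmul, LinearEquiv.coe_coe,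
    TensorProduct.lid_tmul, LinearMap.mulRight_apply] at h2
  have e1 : Δ (piL K A Δ ε x) = ∑ p ∈ t, ε (p.1*x) • Δ p.2 := by
    rw [WHA.piL_rep Δ ε ht, map_sum]; simp
  rw [e1, h2, WHA.piL_rep Δ ε ht, ht]
  simp only [TensorProduct.sum_tmul, TensorProduct.smul_tmul', Finset.sum_mul, Finset.mul_sum,
    smul_mul_assoc, Algebra.TensorProduct.tmul_mul_tmul, one_mul]

theorem WHA.U4' (hW : WeakBialgebra K A Δ ε) (x : A) :
    Δ (piL K A Δ ε x) = Δ 1 * (piL K A Δ ε x ⊗ₜ[K] (1:A)) := by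
  obtain ⟨t, ht⟩ := TensorProduct.exists_finset (Δ 1)
  have hkey := WHA.lTD1_b Δ ε hW
  rw [ht] at hkey
  simp only [map_sum, LinearMap.lTensor_tmul, TensorProduct.sum_tmul, TensorProduct.tmul_sum,
    TensorProduct.assoc_tmul, Finset.sum_mul, Finset.mul_sum, Algebra.TensorProduct.tmul_mul_tmul,
    one_mul, mul_one] at hkey
  have h2 := congrArg ((TensorProduct.lid K (A ⊗[K] A)).toLinearMap ∘ₗ
      (ε ∘ₗ LinearMap.mulRight K x).rTensor (A ⊗[K] A)) hkey
  simp only [map_sum, LinearMap.comp_apply, LinearMap.rTensor_tmul, LinearEquiv.coe_coe,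
    TensorProduct.lid_tmul, LinearMap.mulRight_apply] at h2
  have e1 : Δ (piL K A Δ ε x) = ∑ p ∈ t, ε (p.1*x) • Δ p.2 := by
    rw [WHA.piL_rep Δ ε ht, map_sum]; simp
  rw [e1, h2, WHA.piL_rep Δ ε ht, ht]
  simp only [TensorProduct.sum_tmul, TensorProduct.smul_tmul', Finset.sum_mul, Finset.mul_sum,
    mul_smul_comm, smul_mul_assoc, Algebra.TensorProduct.tmul_mul_tmul, one_mul, mul_one]

theorem WHA.U6 (hW : WeakBialgebra K A Δ ε) (x : A) :
    Δ 1 * (piL K A Δ ε x ⊗ₜ[K] (1:A)) = (piL K A Δ ε x ⊗ₜ[K] (1:A)) * Δ 1 := by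
  rw [← WHA.U4' Δ ε hW, WHA.U4 Δ ε hW]

theorem WHA.U5' (hW : WeakBialgebra K A Δ ε) (x : A) :
    Δ (piR K A Δ ε x) = ((1:A) ⊗ₜ[K] piR K A Δ ε x) * Δ 1 := by
  obtain ⟨t, ht⟩ := TensorProduct.exists_finset (Δ 1)
  have hkey := hW.weak_comul_unit_b
  rw [ht] at hkey
  simp only [map_sum, LinearMap.rTensor_tmul, TensorProduct.sum_tmul, TensorProduct.tmul_sum,
    TensorProduct.assoc_symm_tmul, Finset.sum_mul, Finset.mul_sum,
    Algebra.TensorProduct.tmul_mul_tmul, one_mul, mul_one] at hkey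
  have h2 := congrArg ((TensorProduct.rid K (A ⊗[K] A)).toLinearMap ∘ₗ
      (ε ∘ₗ LinearMap.mulLeft K x).lTensor (A ⊗[K] A)) hkey
  simp only [map_sum, LinearMap.comp_apply, LinearMap.lTensor_tmul, LinearEquiv.coe_coe,
    TensorProduct.rid_tmul, LinearMap.mulLeft_apply] at h2
  have e1 : Δ (piR K A Δ ε x) = ∑ p ∈ t, ε (x*p.2) • Δ p.1 := by
    rw [WHA.piR_rep Δ ε ht, map_sum]; simp
  rw [e1, h2, WHA.piR_rep Δ ε ht, ht]
  simp only [TensorProduct.tmul_sum, TensorProduct.tmul_smul, Finset.sum_mul, Finset.mul_sum,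
    smul_mul_assoc, Algebra.TensorProduct.tmul_mul_tmul, one_mul]

theorem WHA.C1 (hW : WeakBialgebra K A Δ ε) :
    conv Δ (piL K A Δ ε) LinearMap.id = LinearMap.id := by
  ext x
  obtain ⟨t, ht⟩ := TensorProduct.exists_finset (Δ 1)
  obtain ⟨s, hs⟩ := TensorProduct.exists_finset (Δ x)
  have h1 : Δ x = ∑ p ∈ t, ∑ q ∈ s, (p.1*q.1) ⊗ₜ[K] (p.2*q.2) := by
    rw [← WHA.Dabs_l Δ ε hW x, ht, hs]
    simp only [Finset.sum_mul, Finset.mul_sum, Algebra.TensorProduct.tmul_mul_tmul]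
    exact Finset.sum_comm
  have h2 := hW.counit_left x
  rw [h1] at h2
  simp only [map_sum, LinearMap.rTensor_tmul, LinearEquiv.coe_coe, TensorProduct.lid_tmul,
    map_smul] at h2
  rw [LinearMap.id_apply]
  calc conv Δ (piL K A Δ ε) LinearMap.id x
      = ∑ q ∈ s, ∑ p ∈ t, ε (p.1*q.1) • (p.2*q.2) := by
        rw [WHA.conv_rep Δ _ _ x hs]
        refine Finset.sum_congr rfl fun q _ => ?_
        rw [WHA.piL_rep Δ ε ht]
        simp [Finset.sum_mul, smul_mul_assoc]
    _ = ∑ p ∈ t, ∑ q ∈ s, ε (p.1*q.1) • (p.2*q.2) := Finset.sum_comm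
    _ = x := h2

theorem WHA.C1' (hW : WeakBialgebra K A Δ ε) :
    conv Δ LinearMap.id (piR K A Δ ε) = LinearMap.id := by
  ext x
  obtain ⟨t, ht⟩ := TensorProduct.exists_finset (Δ 1)
  obtain ⟨s, hs⟩ := TensorProduct.exists_finset (Δ x)
  have h1 : Δ x = ∑ q ∈ s, ∑ p ∈ t, (q.1*p.1) ⊗ₜ[K] (q.2*p.2) := by
    rw [← WHA.Dabs_r Δ ε hW x, ht, hs]
    simp only [Finset.sum_mul, Finset.mul_sum, Algebra.TensorProduct.tmul_mul_tmul]
    exact Finset.sum_comm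
  have h2 := hW.counit_right x
  rw [h1] at h2
  simp only [map_sum, LinearMap.lTensor_tmul, LinearEquiv.coe_coe, TensorProduct.rid_tmul,
    map_smul] at h2
  rw [LinearMap.id_apply]
  calc conv Δ LinearMap.id (piR K A Δ ε) x
      = ∑ q ∈ s, ∑ p ∈ t, ε (q.2*p.2) • (q.1*p.1) := by
        rw [WHA.conv_rep Δ _ _ x hs]
        refine Finset.sum_congr rfl fun q _ => ?_
        rw [WHA.piR_rep Δ ε ht]
        simp [Finset.mul_sum, mul_smul_comm]
    _ = x := h2

end WHAAux4

noncomputable def WHA.iota1 {K : Type*} [Field K] {A : Type*} [Ring A] [Algebra K A] :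
    A →ₗ[K] A ⊗[K] A := (TensorProduct.mk K A A).flip 1

noncomputable def WHA.iota2 {K : Type*} [Field K] {A : Type*} [Ring A] [Algebra K A] :
    A →ₗ[K] A ⊗[K] A := TensorProduct.mk K A A 1

section WHAAux5
set_option maxHeartbeats 2000000
set_option synthInstance.maxHeartbeats 400000

open LinearMap WHA

variable {K : Type*} [Field K] {A : Type*} [Ring A] [Algebra K A]
variable (Δ : A →ₗ[K] A ⊗[K] A) (ε : A →ₗ[K] K) (S : A →ₗ[K] A)

@[simp] theorem WHA.iota1_apply (a : A) : (iota1 : A →ₗ[K] A ⊗[K] A) a = a ⊗ₜ[K] 1 := rfl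
@[simp] theorem WHA.iota2_apply (a : A) : (iota2 : A →ₗ[K] A ⊗[K] A) a = (1:A) ⊗ₜ[K] a := rfl

theorem WHA.piL_conv (hA : WeakHopfAlgebra K A Δ ε S) :
    conv Δ LinearMap.id S = piL K A Δ ε := by
  ext x
  rw [← hA.antipode_a x]
  rfl

theorem WHA.piR_conv (hA : WeakHopfAlgebra K A Δ ε S) :
    conv Δ S LinearMap.id = piR K A Δ ε := by
  ext x
  rw [← hA.antipode_b x]
  rfl

theorem WHA.SIS (hA : WeakHopfAlgebra K A Δ ε S) :
    conv Δ S (piL K A Δ ε) = S := by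
  have hP : piL K A Δ ε = LinearMap.mul' K A ∘ₗ LinearMap.lTensor A S ∘ₗ Δ := by
    ext x; exact (hA.antipode_a x).symm
  ext x
  rw [← hA.antipode_c x, conv_apply, hP]
  congr 1
  have hm : TensorProduct.map S ((LinearMap.mul' K A ∘ₗ LinearMap.lTensor A S) ∘ₗ Δ)
      = TensorProduct.map S (LinearMap.mul' K A ∘ₗ LinearMap.lTensor A S) ∘ₗ
        LinearMap.lTensor A Δ := by
    apply TensorProduct.ext'
    intro a b
    simp
  rw [← LinearMap.comp_assoc, hm]
  rfl

theorem WHA.piRS (hA : WeakHopfAlgebra K A Δ ε S) :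
    conv Δ (piR K A Δ ε) S = S := by
  rw [← WHA.piR_conv Δ ε S hA, conv_assoc Δ hA.toWeakBialgebra.coassoc,
    WHA.piL_conv Δ ε S hA, WHA.SIS Δ ε S hA]

theorem WHA.C3 (hA : WeakHopfAlgebra K A Δ ε S) (x : A) :
    S (piL K A Δ ε x) = piR K A Δ ε (piL K A Δ ε x) := by
  have hW := hA.toWeakBialgebra
  obtain ⟨t, ht⟩ := TensorProduct.exists_finset (Δ 1)
  set y := piL K A Δ ε x with hy
  have hΔy : Δ y = ∑ p ∈ t, (y*p.1) ⊗ₜ[K] p.2 := by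
    rw [hy, WHA.U4 Δ ε hW x, ← hy, ht, Finset.mul_sum]
    simp [Algebra.TensorProduct.tmul_mul_tmul]
  have hU1 := WHA.U1 Δ ε hW
  rw [ht] at hU1
  simp only [map_sum, LinearMap.lTensor_tmul] at hU1
  have h3 := congrArg (LinearMap.mul' K A ∘ₗ
      TensorProduct.map (S ∘ₗ LinearMap.mulLeft K y) LinearMap.id) hU1
  simp only [map_sum, LinearMap.comp_apply, TensorProduct.map_tmul, LinearMap.mul'_apply,
    LinearMap.mulLeft_apply, LinearMap.id_apply] at h3
  -- h3 : ∑ S (y*p.1) * piL p.2 = ∑ S (y*p.1) * p.2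
  calc S y = conv Δ S (piL K A Δ ε) y := (LinearMap.congr_fun (WHA.SIS Δ ε S hA) y).symm
    _ = ∑ p ∈ t, S (y*p.1) * piL K A Δ ε p.2 := by
        rw [conv_apply, hΔy]
        simp [LinearMap.mul'_apply]
    _ = ∑ p ∈ t, S (y*p.1) * p.2 := h3
    _ = LinearMap.mul' K A (LinearMap.rTensor A S (Δ y)) := by
        rw [hΔy]
        simp [LinearMap.mul'_apply]
    _ = piR K A Δ ε y := hA.antipode_b y

theorem WHA.DmultL (hW : WeakBialgebra K A Δ ε) (f g : A →ₗ[K] A) :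
    conv Δ (Δ ∘ₗ f) (Δ ∘ₗ g) = Δ ∘ₗ conv Δ f g := by
  ext x
  obtain ⟨s, hs⟩ := TensorProduct.exists_finset (Δ x)
  rw [LinearMap.comp_apply, conv_rep Δ _ _ x hs, conv_rep Δ f g x hs, map_sum]
  exact Finset.sum_congr rfl fun q _ => by
    rw [LinearMap.comp_apply, LinearMap.comp_apply, ← hW.comul_mul]

theorem WHA.iota1_push (f g : A →ₗ[K] A) :
    conv Δ (iota1 ∘ₗ f) (iota1 ∘ₗ g) = iota1 ∘ₗ conv Δ f g := by
  ext x
  obtain ⟨s, hs⟩ := TensorProduct.exists_finset (Δ x)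
  rw [LinearMap.comp_apply, conv_rep Δ _ _ x hs, conv_rep Δ f g x hs]
  simp [Algebra.TensorProduct.tmul_mul_tmul, TensorProduct.sum_tmul]

theorem WHA.D_eq : conv Δ iota1 iota2 = Δ := by
  ext x
  obtain ⟨s, hs⟩ := TensorProduct.exists_finset (Δ x)
  rw [conv_rep Δ _ _ x hs, hs]
  simp [Algebra.TensorProduct.tmul_mul_tmul]

theorem WHA.CH2 (hW : WeakBialgebra K A Δ ε) :
    conv Δ iota2 (Δ ∘ₗ piR K A Δ ε) = LinearMap.mulRight K (Δ 1) ∘ₗ iota2 := by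
  ext x
  obtain ⟨s, hs⟩ := TensorProduct.exists_finset (Δ x)
  have hC := LinearMap.congr_fun (WHA.C1' Δ ε hW) x
  rw [conv_rep Δ _ _ x hs, LinearMap.id_apply] at hC
  simp only [LinearMap.id_apply] at hC
  rw [conv_rep Δ _ _ x hs, LinearMap.comp_apply, LinearMap.mulRight_apply]
  calc ∑ q ∈ s, iota2 q.1 * (Δ ∘ₗ piR K A Δ ε) q.2
      = ∑ q ∈ s, ((1:A) ⊗ₜ[K] (q.1 * piR K A Δ ε q.2)) * Δ 1 := by
        refine Finset.sum_congr rfl fun q _ => ?_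
        rw [LinearMap.comp_apply, WHA.U5' Δ ε hW, ← mul_assoc]
        congr 1
        rw [WHA.iota2_apply, Algebra.TensorProduct.tmul_mul_tmul, one_mul]
    _ = ((1:A) ⊗ₜ[K] x) * Δ 1 := by
        rw [← Finset.sum_mul, ← TensorProduct.tmul_sum, hC]
    _ = (iota2 : A →ₗ[K] A ⊗[K] A) x * Δ 1 := by rw [WHA.iota2_apply]

theorem WHA.CH4 (hW : WeakBialgebra K A Δ ε) :
    LinearMap.mulRight K (Δ 1) ∘ₗ iota2 = conv Δ (iota1 ∘ₗ piR K A Δ ε) iota2 := by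
  ext x
  obtain ⟨s, hs⟩ := TensorProduct.exists_finset (Δ x)
  have hw := WHA.W9 Δ ε hW x
  rw [hs] at hw
  simp only [map_sum, LinearMap.rTensor_tmul] at hw
  rw [conv_rep Δ _ _ x hs, LinearMap.comp_apply, LinearMap.mulRight_apply, WHA.iota2_apply,
    ← hw]
  refine Finset.sum_congr rfl fun q _ => ?_
  simp [Algebra.TensorProduct.tmul_mul_tmul]

theorem WHA.CH3 (hA : WeakHopfAlgebra K A Δ ε S) :
    conv Δ (LinearMap.mulRight K (Δ 1) ∘ₗ iota1 ∘ₗ S) Δ = conv Δ (iota1 ∘ₗ piR K A Δ ε) iota2 := by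
  have hW := hA.toWeakBialgebra
  have h1 : conv Δ (LinearMap.mulRight K (Δ 1) ∘ₗ iota1 ∘ₗ S) Δ = conv Δ (iota1 ∘ₗ S) Δ := by
    ext x
    obtain ⟨s, hs⟩ := TensorProduct.exists_finset (Δ x)
    rw [conv_rep Δ _ _ x hs, conv_rep Δ _ _ x hs]
    refine Finset.sum_congr rfl fun q _ => ?_
    rw [LinearMap.comp_apply, LinearMap.comp_apply, LinearMap.mulRight_apply, mul_assoc,
      WHA.Dabs_l Δ ε hW]
  have h3 : conv Δ (iota1 ∘ₗ S) (conv Δ iota1 iota2) = conv Δ (iota1 ∘ₗ piR K A Δ ε) iota2 := by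
    rw [← conv_assoc Δ hW.coassoc]
    congr 1
    have h4 : conv Δ (iota1 ∘ₗ S) (iota1 ∘ₗ LinearMap.id) = iota1 ∘ₗ conv Δ S LinearMap.id :=
      WHA.iota1_push Δ S LinearMap.id
    rw [LinearMap.comp_id] at h4
    rw [h4, WHA.piR_conv Δ ε S hA]
  rw [h1, ← h3]
  congr 1
  exact (WHA.D_eq Δ).symm

theorem WHA.CH5 (hA : WeakHopfAlgebra K A Δ ε S) :
    conv Δ (LinearMap.mulRight K (Δ 1) ∘ₗ iota1 ∘ₗ S) (Δ ∘ₗ piL K A Δ ε)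
      = LinearMap.mulRight K (Δ 1) ∘ₗ iota1 ∘ₗ S := by
  have hW := hA.toWeakBialgebra
  ext x
  obtain ⟨s, hs⟩ := TensorProduct.exists_finset (Δ x)
  have hS := LinearMap.congr_fun (WHA.SIS Δ ε S hA) x
  rw [conv_rep Δ _ _ x hs] at hS
  rw [conv_rep Δ _ _ x hs]
  calc ∑ q ∈ s, (LinearMap.mulRight K (Δ 1) ∘ₗ iota1 ∘ₗ S) q.1 * (Δ ∘ₗ piL K A Δ ε) q.2
      = ∑ q ∈ s, ((S q.1 * piL K A Δ ε q.2) ⊗ₜ[K] (1:A)) * Δ 1 := by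
        refine Finset.sum_congr rfl fun q _ => ?_
        rw [LinearMap.comp_apply, LinearMap.comp_apply, LinearMap.comp_apply,
          LinearMap.mulRight_apply, WHA.iota1_apply, WHA.U4' Δ ε hW, mul_assoc,
          ← mul_assoc (Δ 1), WHA.Dabs_l Δ ε hW 1, WHA.U6 Δ ε hW, ← mul_assoc,
          Algebra.TensorProduct.tmul_mul_tmul, one_mul]
    _ = ((∑ q ∈ s, S q.1 * piL K A Δ ε q.2) ⊗ₜ[K] (1:A)) * Δ 1 := by
        rw [← Finset.sum_mul, ← TensorProduct.sum_tmul]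
    _ = (LinearMap.mulRight K (Δ 1) ∘ₗ iota1 ∘ₗ S) x := by
        rw [hS]
        rfl

theorem WHA.L14 (hA : WeakHopfAlgebra K A Δ ε S) :
    conv Δ iota2 (Δ ∘ₗ S) = LinearMap.mulRight K (Δ 1) ∘ₗ iota1 ∘ₗ S := by
  have hW := hA.toWeakBialgebra
  have hco := hW.coassoc
  have hΛ : conv Δ (Δ ∘ₗ piR K A Δ ε) (Δ ∘ₗ S) = Δ ∘ₗ S := by
    rw [WHA.DmultL Δ ε hW, WHA.piRS Δ ε S hA]
  have hDL : conv Δ Δ (Δ ∘ₗ S) = Δ ∘ₗ piL K A Δ ε := by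
    have : conv Δ (Δ ∘ₗ LinearMap.id) (Δ ∘ₗ S) = Δ ∘ₗ conv Δ LinearMap.id S :=
      WHA.DmultL Δ ε hW _ _
    rw [LinearMap.comp_id] at this
    rw [this, WHA.piL_conv Δ ε S hA]
  calc conv Δ iota2 (Δ ∘ₗ S)
      = conv Δ iota2 (conv Δ (Δ ∘ₗ piR K A Δ ε) (Δ ∘ₗ S)) := by rw [hΛ]
    _ = conv Δ (conv Δ iota2 (Δ ∘ₗ piR K A Δ ε)) (Δ ∘ₗ S) := (conv_assoc Δ hco _ _ _).symm
    _ = conv Δ (LinearMap.mulRight K (Δ 1) ∘ₗ iota2) (Δ ∘ₗ S) := by rw [WHA.CH2 Δ ε hW]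
    _ = conv Δ (conv Δ (iota1 ∘ₗ piR K A Δ ε) iota2) (Δ ∘ₗ S) := by rw [← WHA.CH4 Δ ε hW]
    _ = conv Δ (conv Δ (LinearMap.mulRight K (Δ 1) ∘ₗ iota1 ∘ₗ S) Δ) (Δ ∘ₗ S) := by
        rw [WHA.CH3 Δ ε S hA]
    _ = conv Δ (LinearMap.mulRight K (Δ 1) ∘ₗ iota1 ∘ₗ S) (conv Δ Δ (Δ ∘ₗ S)) :=
        conv_assoc Δ hco _ _ _
    _ = conv Δ (LinearMap.mulRight K (Δ 1) ∘ₗ iota1 ∘ₗ S) (Δ ∘ₗ piL K A Δ ε) := by rw [hDL]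
    _ = LinearMap.mulRight K (Δ 1) ∘ₗ iota1 ∘ₗ S := WHA.CH5 Δ ε S hA

end WHAAux5

section WHAAux6
set_option maxHeartbeats 2000000
set_option synthInstance.maxHeartbeats 400000

open LinearMap WHA

variable {K : Type*} [Field K] {A : Type*} [Ring A] [Algebra K A]
variable (Δ : A →ₗ[K] A ⊗[K] A) (ε : A →ₗ[K] K) (S : A →ₗ[K] A)
variable {M : Type*} [AddCommGroup M] [Module K M]
variable (act : M →ₗ[K] A →ₗ[K] M) (ρ : M →ₗ[K] M ⊗[K] A)

theorem WHA.Mi (hM : RightWeakHopfModule K A Δ ε M act ρ) (m : M) :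
    TensorProduct.lift act (LinearMap.lTensor M (piR K A Δ ε) (ρ m)) = m := by
  obtain ⟨t, ht⟩ := TensorProduct.exists_finset (Δ 1)
  obtain ⟨s, hs⟩ := TensorProduct.exists_finset (ρ m)
  have h1 : ρ m = TensorProduct.map₂ act (LinearMap.mul K A) (ρ m) (Δ 1) := by
    rw [← hM.compat m 1, hM.act_one]
  have h2 : (TensorProduct.rid K M)
      (ε.lTensor M (TensorProduct.map₂ act (LinearMap.mul K A) (ρ m) (Δ 1))) = m := by
    rw [← h1]; exact hM.counital m
  rw [hs, ht] at h2
  simp only [map_sum, TensorProduct.map₂_apply_tmul, LinearMap.sum_apply,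
    TensorProduct.map_tmul, LinearMap.mul_apply', LinearMap.lTensor_tmul,
    LinearEquiv.coe_coe, TensorProduct.rid_tmul] at h2
  rw [hs]
  simp only [map_sum, LinearMap.lTensor_tmul, TensorProduct.lift.tmul]
  rw [← h2]
  have hq : ∀ q : M × A, act q.1 (piR K A Δ ε q.2) = ∑ p ∈ t, ε (q.2*p.2) • act q.1 p.1 := by
    intro q
    rw [WHA.piR_rep Δ ε ht]
    simp only [map_sum, map_smul]
  simp only [hq]
  exact Finset.sum_comm

theorem WHA.MA (hW : WeakBialgebra K A Δ ε)
    (m : M) (h : ρ m = LinearMap.rTensor A (act m) (Δ 1)) :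
    ρ m = LinearMap.lTensor M (piL K A Δ ε) (ρ m) := by
  have e1 := LinearMap.congr_fun
    (LinearMap.lTensor_comp_rTensor A (act m) (piL K A Δ ε)) (Δ 1)
  have e2 := LinearMap.congr_fun
    (LinearMap.rTensor_comp_lTensor A (act m) (piL K A Δ ε)) (Δ 1)
  simp only [LinearMap.comp_apply] at e1 e2
  rw [h, e1, ← e2, WHA.U1 Δ ε hW]

theorem WHA.MB (hA : WeakHopfAlgebra K A Δ ε S) (hM : RightWeakHopfModule K A Δ ε M act ρ)
    (m : M) (h : ρ m = LinearMap.lTensor M (piL K A Δ ε) (ρ m)) :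
    TensorProduct.lift act (LinearMap.lTensor M S (ρ m)) = m := by
  have hSP : S ∘ₗ piL K A Δ ε = piR K A Δ ε ∘ₗ piL K A Δ ε := by
    ext x; exact WHA.C3 Δ ε S hA x
  calc TensorProduct.lift act (LinearMap.lTensor M S (ρ m))
      = TensorProduct.lift act (LinearMap.lTensor M S
          (LinearMap.lTensor M (piL K A Δ ε) (ρ m))) := by rw [← h]
    _ = TensorProduct.lift act (LinearMap.lTensor M (S ∘ₗ piL K A Δ ε) (ρ m)) := by
        rw [LinearMap.lTensor_comp, LinearMap.comp_apply]
    _ = TensorProduct.lift act (LinearMap.lTensor M (piR K A Δ ε ∘ₗ piL K A Δ ε) (ρ m)) := by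
        rw [hSP]
    _ = TensorProduct.lift act (LinearMap.lTensor M (piR K A Δ ε)
          (LinearMap.lTensor M (piL K A Δ ε) (ρ m))) := by
        rw [LinearMap.lTensor_comp, LinearMap.comp_apply]
    _ = TensorProduct.lift act (LinearMap.lTensor M (piR K A Δ ε) (ρ m)) := by rw [← h]
    _ = m := WHA.Mi Δ ε act ρ hM m

theorem WHA.MC (hA : WeakHopfAlgebra K A Δ ε S) (hM : RightWeakHopfModule K A Δ ε M act ρ)
    (m : M) :
    ρ (TensorProduct.lift act (LinearMap.lTensor M S (ρ m)))
      = LinearMap.rTensor A (act (TensorProduct.lift act (LinearMap.lTensor M S (ρ m)))) (Δ 1) := by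
  have hW := hA.toWeakBialgebra
  obtain ⟨t, ht⟩ := TensorProduct.exists_finset (Δ 1)
  obtain ⟨s, hs⟩ := TensorProduct.exists_finset (ρ m)
  set Φt : (M ⊗[K] A) ⊗[K] A →ₗ[K] M ⊗[K] A :=
    TensorProduct.lift ((TensorProduct.map₂ act (LinearMap.mul K A)).compl₂ (Δ ∘ₗ S)) with hΦt
  set ν : M ⊗[K] (A ⊗[K] A) →ₗ[K] M ⊗[K] A :=
    (TensorProduct.lift act).rTensor A ∘ₗ (TensorProduct.assoc K M A A).symm.toLinearMap with hν
  have hν_apply : ∀ (n : M) (c d : A), ν (n ⊗ₜ[K] (c ⊗ₜ[K] d)) = act n c ⊗ₜ[K] d := by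
    intro n c d
    simp [hν]
  have key : ∀ (n : M) (c : A) (w : A ⊗[K] A),
      TensorProduct.map₂ act (LinearMap.mul K A) (n ⊗ₜ[K] c) w
        = ν (n ⊗ₜ[K] (((1:A) ⊗ₜ[K] c) * w)) := by
    intro n c w
    induction w using TensorProduct.induction_on with
    | zero => simp
    | tmul e f =>
        rw [TensorProduct.map₂_apply_tmul, TensorProduct.map_tmul,
          Algebra.TensorProduct.tmul_mul_tmul, one_mul, hν_apply, LinearMap.mul_apply']
    | add u v hu hv =>
        rw [map_add, hu, hv, mul_add, TensorProduct.tmul_add, map_add]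
  have hEm : TensorProduct.lift act (LinearMap.lTensor M S (ρ m))
      = ∑ q ∈ s, act q.1 (S q.2) := by
    rw [hs]; simp
  have hco : ρ.rTensor A (ρ m) = (TensorProduct.assoc K M A A).symm
      (LinearMap.lTensor M Δ (ρ m)) := by
    rw [← hM.coassoc m, LinearEquiv.symm_apply_apply]
  have ha : ρ (TensorProduct.lift act (LinearMap.lTensor M S (ρ m)))
      = Φt (ρ.rTensor A (ρ m)) := by
    have hL : ρ (TensorProduct.lift act (LinearMap.lTensor M S (ρ m)))
        = ∑ q ∈ s, ρ (act q.1 (S q.2)) := by rw [hEm, map_sum]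
    have hR : Φt (ρ.rTensor A (ρ m)) = ∑ q ∈ s, Φt ((ρ q.1) ⊗ₜ[K] q.2) := by
      rw [hs, map_sum, map_sum]
      simp only [LinearMap.rTensor_tmul]
    rw [hL, hR]
    refine Finset.sum_congr rfl fun q _ => ?_
    rw [hM.compat q.1 (S q.2), hΦt, TensorProduct.lift.tmul]
    rfl
  have hd : ∀ (n : M) (b : A), Φt ((TensorProduct.assoc K M A A).symm (n ⊗ₜ[K] Δ b))
      = ν (n ⊗ₜ[K] (conv Δ iota2 (Δ ∘ₗ S) b)) := by
    intro n b
    obtain ⟨u, hu⟩ := TensorProduct.exists_finset (Δ b)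
    rw [hu, TensorProduct.tmul_sum, map_sum, map_sum, conv_rep Δ _ _ b hu,
      TensorProduct.tmul_sum, map_sum]
    refine Finset.sum_congr rfl fun r _ => ?_
    rw [TensorProduct.assoc_symm_tmul, hΦt, TensorProduct.lift.tmul]
    have e : ((TensorProduct.map₂ act (LinearMap.mul K A)).compl₂ (Δ ∘ₗ S)) (n ⊗ₜ[K] r.1) r.2
        = TensorProduct.map₂ act (LinearMap.mul K A) (n ⊗ₜ[K] r.1) (Δ (S r.2)) := rfl
    rw [e, key, WHA.iota2_apply]
    rfl
  have hpush : (TensorProduct.assoc K M A A).symm ((LinearMap.lTensor M Δ) (ρ m))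
      = ∑ q ∈ s, (TensorProduct.assoc K M A A).symm (q.1 ⊗ₜ[K] Δ q.2) := by
    rw [hs, map_sum, map_sum]
    simp only [LinearMap.lTensor_tmul]
  rw [ha, hco, hpush, map_sum]
  have hL14 := WHA.L14 Δ ε S hA
  calc ∑ q ∈ s, Φt ((TensorProduct.assoc K M A A).symm (q.1 ⊗ₜ[K] Δ q.2))
      = ∑ q ∈ s, ν (q.1 ⊗ₜ[K] (conv Δ iota2 (Δ ∘ₗ S) q.2)) := by
        exact Finset.sum_congr rfl fun q _ => hd q.1 q.2
    _ = ∑ q ∈ s, ∑ p ∈ t, act (act q.1 (S q.2)) p.1 ⊗ₜ[K] p.2 := by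
        refine Finset.sum_congr rfl fun q _ => ?_
        have harg : conv Δ iota2 (Δ ∘ₗ S) q.2 = ∑ p ∈ t, (S q.2 * p.1) ⊗ₜ[K] p.2 := by
          rw [hL14]
          simp only [LinearMap.comp_apply, LinearMap.mulRight_apply, WHA.iota1_apply]
          rw [ht, Finset.mul_sum]
          simp only [Algebra.TensorProduct.tmul_mul_tmul, one_mul]
        rw [harg, TensorProduct.tmul_sum, map_sum]
        refine Finset.sum_congr rfl fun p _ => ?_
        rw [hν_apply, hM.act_mul]
    _ = LinearMap.rTensor A (act (TensorProduct.lift act (LinearMap.lTensor M S (ρ m)))) (Δ 1) := by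
        rw [hEm, ht, map_sum, Finset.sum_comm]
        refine Finset.sum_congr rfl fun p _ => ?_
        rw [LinearMap.rTensor_tmul, map_sum, LinearMap.sum_apply, TensorProduct.sum_tmul]

end WHAAux6
/-- Let `M` be a right weak Hopf module over a weak Hopf algebra `A`.
Then (i) `Σ m₀ · Π^R(m₁) = m`; (ii) the coinvariants
`Coinv M = {m | ρ m = Σ m₀ ⊗ Π^L(m₁)}` coincide with `{m | ρ m = Σ m·1₍₁₎ ⊗ 1₍₂₎}`; and
(iii) `E(m) = Σ m₀ · S(m₁)` is an idempotent map with range `Coinv M`. -/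
theorem rightWeakHopfModule_coinvariants
    (K : Type*) [Field K] (A : Type*) [Ring A] [Algebra K A] [FiniteDimensional K A]
    (Δ : A →ₗ[K] A ⊗[K] A) (ε : A →ₗ[K] K) (S : A →ₗ[K] A)
    (hA : WeakHopfAlgebra K A Δ ε S)
    (M : Type*) [AddCommGroup M] [Module K M]
    (act : M →ₗ[K] A →ₗ[K] M) (ρ : M →ₗ[K] M ⊗[K] A)
    (hM : RightWeakHopfModule K A Δ ε M act ρ) :
    (∀ m : M,
      TensorProduct.lift act (LinearMap.lTensor M (piR K A Δ ε) (ρ m)) = m) ∧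
    ({m : M | ρ m = LinearMap.lTensor M (piL K A Δ ε) (ρ m)} =
      {m : M | ρ m = LinearMap.rTensor A (act m) (Δ 1)}) ∧
    (∀ m : M,
      (fun n : M => TensorProduct.lift act (LinearMap.lTensor M S (ρ n)))
        ((fun n : M => TensorProduct.lift act (LinearMap.lTensor M S (ρ n))) m) =
      (fun n : M => TensorProduct.lift act (LinearMap.lTensor M S (ρ n))) m) ∧
    (Set.range (fun n : M => TensorProduct.lift act (LinearMap.lTensor M S (ρ n))) =
      {m : M | ρ m = LinearMap.lTensor M (piL K A Δ ε) (ρ m)}) := by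
  have hW := hA.toWeakBialgebra
  refine ⟨fun m => WHA.Mi Δ ε act ρ hM m, ?_, ?_, ?_⟩
  · ext m
    simp only [Set.mem_setOf_eq]
    constructor
    · intro h
      have hEm := WHA.MB Δ ε S act ρ hA hM m h
      have hC := WHA.MC Δ ε S act ρ hA hM m
      rw [hEm] at hC
      exact hC
    · intro h
      exact WHA.MA Δ ε act ρ hW m h
  · intro m
    have h1 := WHA.MC Δ ε S act ρ hA hM m
    have h2 := WHA.MA Δ ε act ρ hW _ h1
    exact WHA.MB Δ ε S act ρ hA hM _ h2
  · ext x
    simp only [Set.mem_range, Set.mem_setOf_eq]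
    constructor
    · rintro ⟨n, rfl⟩
      exact WHA.MA Δ ε act ρ hW _ (WHA.MC Δ ε S act ρ hA hM n)
    · intro h
      exact ⟨x, WHA.MB Δ ε S act ρ hA hM x h⟩
end
end

section
/- Let A be a weak Hopf algebra over a field K. If A contains a nondegenerate two-sided integral, then every two-sided integral i ∈ A is S-invariant: S(i) = i. -/
open TensorProduct

noncomputable section

variable (K : Type*) [Field K] (A : Type*) [Ring A] [Algebra K A]

namespace WHAaux

open LinearMap Finset

variable {K : Type*} [Field K] {A : Type*} [Ring A] [Algebra K A]

/-- Apply a functional to the first tensor factor. -/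
def apFst {M : Type*} [AddCommMonoid M] [Module K M] (φ : A →ₗ[K] K) :
    A ⊗[K] M →ₗ[K] M :=
  (TensorProduct.lid K M).toLinearMap ∘ₗ φ.rTensor M

/-- Apply a functional to the second tensor factor. -/
def apSnd {M : Type*} [AddCommMonoid M] [Module K M] (φ : A →ₗ[K] K) :
    M ⊗[K] A →ₗ[K] M :=
  (TensorProduct.rid K M).toLinearMap ∘ₗ φ.lTensor M

@[simp] lemma apFst_tmul {M : Type*} [AddCommMonoid M] [Module K M]
    (φ : A →ₗ[K] K) (a : A) (m : M) : apFst φ (a ⊗ₜ[K] m) = φ a • m := by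
  simp [apFst]

@[simp] lemma apSnd_tmul {M : Type*} [AddCommMonoid M] [Module K M]
    (φ : A →ₗ[K] K) (a : A) (m : M) : apSnd φ (m ⊗ₜ[K] a) = φ a • m := by
  simp [apSnd]

variable {Δ : A →ₗ[K] A ⊗[K] A} {ε : A →ₗ[K] K} {S : A →ₗ[K] A}

lemma counitL (hB : WeakBialgebra K A Δ ε) (x : A) : apFst ε (Δ x) = x := by
  simpa [apFst] using hB.counit_left x

lemma counitR (hB : WeakBialgebra K A Δ ε) (x : A) : apSnd ε (Δ x) = x := by
  simpa [apSnd] using hB.counit_right x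

lemma piL_rep {s : Finset (A × A)} (hs : Δ 1 = ∑ a ∈ s, a.1 ⊗ₜ[K] a.2) (x : A) :
    piL K A Δ ε x = ∑ a ∈ s, ε (a.1 * x) • a.2 := by
  simp only [piL, LinearMap.comp_apply]
  have h1 : ((TensorProduct.mk K A A).flip 1) x = x ⊗ₜ[K] (1:A) := rfl
  rw [h1]
  have h2 : LinearMap.mulLeft K (Δ 1) (x ⊗ₜ[K] (1:A)) = ∑ a ∈ s, (a.1 * x) ⊗ₜ[K] a.2 := by
    rw [LinearMap.mulLeft_apply, hs, Finset.sum_mul]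
    simp [Algebra.TensorProduct.tmul_mul_tmul]
  rw [h2]
  simp

lemma piR_rep {s : Finset (A × A)} (hs : Δ 1 = ∑ a ∈ s, a.1 ⊗ₜ[K] a.2) (x : A) :
    piR K A Δ ε x = ∑ a ∈ s, ε (x * a.2) • a.1 := by
  simp only [piR, LinearMap.comp_apply]
  have h1 : (TensorProduct.mk K A A) 1 x = (1:A) ⊗ₜ[K] x := rfl
  rw [h1]
  have h2 : LinearMap.mulRight K (Δ 1) ((1:A) ⊗ₜ[K] x) = ∑ a ∈ s, a.1 ⊗ₜ[K] (x * a.2) := by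
    rw [LinearMap.mulRight_apply, hs, Finset.mul_sum]
    simp [Algebra.TensorProduct.tmul_mul_tmul]
  rw [h2]
  simp

lemma comul_one_mul (hB : WeakBialgebra K A Δ ε) :
    ∀ x : A, Δ 1 * Δ x = Δ x := by
  intro x; rw [← hB.comul_mul, one_mul]

lemma mul_comul_one (hB : WeakBialgebra K A Δ ε) :
    ∀ x : A, Δ x * Δ 1 = Δ x := by
  intro x; rw [← hB.comul_mul, mul_one]


section Patterns

variable {s : Finset (A × A)}

lemma assoc_sum {ι : Type*} (t : Finset ι) (f : ι → (A ⊗[K] A) ⊗[K] A) :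
    (TensorProduct.assoc K A A A) (∑ a ∈ t, f a) = ∑ a ∈ t, (TensorProduct.assoc K A A A) (f a) :=
  map_sum ((TensorProduct.assoc K A A A).toLinearMap) _ _

lemma assoc_symm_sum {ι : Type*} (t : Finset ι) (f : ι → A ⊗[K] (A ⊗[K] A)) :
    (TensorProduct.assoc K A A A).symm (∑ a ∈ t, f a)
      = ∑ a ∈ t, (TensorProduct.assoc K A A A).symm (f a) :=
  map_sum ((TensorProduct.assoc K A A A).symm.toLinearMap) _ _

lemma assoc_add (u v : (A ⊗[K] A) ⊗[K] A) :
    (TensorProduct.assoc K A A A) (u + v)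
      = (TensorProduct.assoc K A A A) u + (TensorProduct.assoc K A A A) v :=
  map_add ((TensorProduct.assoc K A A A).toLinearMap) u v

lemma assoc_zero : (TensorProduct.assoc K A A A) (0 : (A ⊗[K] A) ⊗[K] A) = 0 :=
  map_zero ((TensorProduct.assoc K A A A).toLinearMap)

lemma assoc_symm_add (u v : A ⊗[K] (A ⊗[K] A)) :
    (TensorProduct.assoc K A A A).symm (u + v)
      = (TensorProduct.assoc K A A A).symm u + (TensorProduct.assoc K A A A).symm v :=
  map_add ((TensorProduct.assoc K A A A).symm.toLinearMap) u v

lemma assoc_symm_zero : (TensorProduct.assoc K A A A).symm (0 : A ⊗[K] (A ⊗[K] A)) = 0 :=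
  map_zero ((TensorProduct.assoc K A A A).symm.toLinearMap)

/-- canonical form of `(Δ ⊗ id) Δ x` -/
lemma rT_canon {x : A} (hs : Δ x = ∑ a ∈ s, a.1 ⊗ₜ[K] a.2) :
    Δ.rTensor A (Δ x) = ∑ a ∈ s, (Δ a.1) ⊗ₜ[K] a.2 := by
  rw [hs, map_sum]; simp

/-- canonical form of `(id ⊗ Δ) Δ x` -/
lemma lT_canon {x : A} (hs : Δ x = ∑ a ∈ s, a.1 ⊗ₜ[K] a.2) :
    Δ.lTensor A (Δ x) = ∑ a ∈ s, a.1 ⊗ₜ[K] (Δ a.2) := by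
  rw [hs, map_sum]; simp

/-- weak_comul_unit_a, in coordinates -/
lemma patA_raw (hB : WeakBialgebra K A Δ ε) (hs : Δ 1 = ∑ a ∈ s, a.1 ⊗ₜ[K] a.2) :
    Δ.rTensor A (Δ 1) =
    ∑ a ∈ s, ∑ b ∈ s, (a.1 ⊗ₜ[K] (a.2 * b.1)) ⊗ₜ[K] b.2 := by
  rw [hB.weak_comul_unit_a]
  have h1 : (Δ 1 ⊗ₜ[K] (1:A)) = ∑ a ∈ s, (a.1 ⊗ₜ[K] a.2) ⊗ₜ[K] (1:A) := by
    rw [hs, TensorProduct.sum_tmul]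
  have h2 : (TensorProduct.assoc K A A A).symm ((1:A) ⊗ₜ[K] Δ 1)
      = ∑ b ∈ s, ((1:A) ⊗ₜ[K] b.1) ⊗ₜ[K] b.2 := by
    rw [hs, TensorProduct.tmul_sum, assoc_symm_sum]
    simp
  rw [h1, h2, Finset.sum_mul_sum]
  simp [Algebra.TensorProduct.tmul_mul_tmul]

lemma patB_raw (hB : WeakBialgebra K A Δ ε) (hs : Δ 1 = ∑ a ∈ s, a.1 ⊗ₜ[K] a.2) :
    Δ.rTensor A (Δ 1) =
    ∑ a ∈ s, ∑ b ∈ s, (b.1 ⊗ₜ[K] (a.1 * b.2)) ⊗ₜ[K] a.2 := by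
  rw [hB.weak_comul_unit_b]
  have h1 : (Δ 1 ⊗ₜ[K] (1:A)) = ∑ b ∈ s, (b.1 ⊗ₜ[K] b.2) ⊗ₜ[K] (1:A) := by
    rw [hs, TensorProduct.sum_tmul]
  have h2 : (TensorProduct.assoc K A A A).symm ((1:A) ⊗ₜ[K] Δ 1)
      = ∑ a ∈ s, ((1:A) ⊗ₜ[K] a.1) ⊗ₜ[K] a.2 := by
    rw [hs, TensorProduct.tmul_sum, assoc_symm_sum]
    simp
  rw [h1, h2, Finset.sum_mul_sum]
  simp [Algebra.TensorProduct.tmul_mul_tmul]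

/-- `Δ²(1)` in coordinates: form a, pattern `Σ (a.1 ⊗ (a.2 b.1)) ⊗ b.2 = Σ Δ a.1 ⊗ a.2`. -/
lemma patA (hB : WeakBialgebra K A Δ ε) (hs : Δ 1 = ∑ a ∈ s, a.1 ⊗ₜ[K] a.2) :
    ∑ a ∈ s, ∑ b ∈ s, (a.1 ⊗ₜ[K] (a.2 * b.1)) ⊗ₜ[K] b.2
    = ∑ a ∈ s, (Δ a.1) ⊗ₜ[K] a.2 := by
  rw [← rT_canon hs]; exact (patA_raw hB hs).symm

lemma patB (hB : WeakBialgebra K A Δ ε) (hs : Δ 1 = ∑ a ∈ s, a.1 ⊗ₜ[K] a.2) :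
    ∑ a ∈ s, ∑ b ∈ s, (b.1 ⊗ₜ[K] (a.1 * b.2)) ⊗ₜ[K] a.2
    = ∑ a ∈ s, (Δ a.1) ⊗ₜ[K] a.2 := by
  rw [← rT_canon hs]; exact (patB_raw hB hs).symm

set_option synthInstance.maxHeartbeats 1000000 in
set_option maxHeartbeats 1000000 in
/-- assoc'd version of `patB` against the `lTensor` canonical form; uses coassociativity. -/
lemma patB_assoc (hB : WeakBialgebra K A Δ ε) (hs : Δ 1 = ∑ a ∈ s, a.1 ⊗ₜ[K] a.2) :
    ∑ a ∈ s, ∑ b ∈ s, b.1 ⊗ₜ[K] ((a.1 * b.2) ⊗ₜ[K] a.2)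
    = ∑ a ∈ s, a.1 ⊗ₜ[K] (Δ a.2) := by
  have h := congrArg (TensorProduct.assoc K A A A) (patB_raw hB hs)
  rw [hB.coassoc 1, lT_canon hs] at h
  rw [assoc_sum] at h
  simp only [assoc_sum, TensorProduct.assoc_tmul] at h
  exact h.symm

set_option synthInstance.maxHeartbeats 1000000 in
set_option maxHeartbeats 1000000 in
lemma patA_assoc (hB : WeakBialgebra K A Δ ε) (hs : Δ 1 = ∑ a ∈ s, a.1 ⊗ₜ[K] a.2) :
    ∑ a ∈ s, ∑ b ∈ s, a.1 ⊗ₜ[K] ((a.2 * b.1) ⊗ₜ[K] b.2)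
    = ∑ a ∈ s, a.1 ⊗ₜ[K] (Δ a.2) := by
  have h := congrArg (TensorProduct.assoc K A A A) (patA_raw hB hs)
  rw [hB.coassoc 1, lT_canon hs] at h
  rw [assoc_sum] at h
  simp only [assoc_sum, TensorProduct.assoc_tmul] at h
  exact h.symm

end Patterns

section Projections

/-- `Δ(Π^L(x)) = (Π^L(x) ⊗ 1) Δ(1)` -/
lemma I2 (hB : WeakBialgebra K A Δ ε) (x : A) :
    Δ (piL K A Δ ε x) = (piL K A Δ ε x ⊗ₜ[K] (1:A)) * Δ 1 := by
  classical
  obtain ⟨s, hs⟩ := TensorProduct.exists_finset (Δ (1:A))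
  have h := congrArg (apFst (K := K) (ε ∘ₗ LinearMap.mulRight K x)) (patA_assoc hB hs)
  simp only [map_sum, apFst_tmul, LinearMap.comp_apply, LinearMap.mulRight_apply] at h
  calc Δ (piL K A Δ ε x) = ∑ a ∈ s, ε (a.1 * x) • Δ a.2 := by
        rw [piL_rep hs, map_sum]; simp
    _ = ∑ a ∈ s, ∑ b ∈ s, ε (a.1 * x) • ((a.2 * b.1) ⊗ₜ[K] b.2) := h.symm
    _ = (piL K A Δ ε x ⊗ₜ[K] (1:A)) * Δ 1 := by
        rw [piL_rep hs, hs, TensorProduct.sum_tmul, Finset.sum_mul]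
        refine Finset.sum_congr rfl fun a _ => ?_
        rw [Finset.mul_sum]
        refine Finset.sum_congr rfl fun b _ => ?_
        simp [Algebra.TensorProduct.tmul_mul_tmul, TensorProduct.smul_tmul',
          smul_mul_assoc]

/-- `Δ(Π^R(x)) = Δ(1) (1 ⊗ Π^R(x))` -/
lemma I2' (hB : WeakBialgebra K A Δ ε) (x : A) :
    Δ (piR K A Δ ε x) = Δ 1 * ((1:A) ⊗ₜ[K] piR K A Δ ε x) := by
  classical
  obtain ⟨s, hs⟩ := TensorProduct.exists_finset (Δ (1:A))
  have h := congrArg (apSnd (K := K) (ε ∘ₗ LinearMap.mulLeft K x)) (patA hB hs)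
  simp only [map_sum, apSnd_tmul, LinearMap.comp_apply, LinearMap.mulLeft_apply] at h
  calc Δ (piR K A Δ ε x) = ∑ a ∈ s, ε (x * a.2) • Δ a.1 := by
        rw [piR_rep hs, map_sum]; simp
    _ = ∑ a ∈ s, ∑ b ∈ s, ε (x * b.2) • (a.1 ⊗ₜ[K] (a.2 * b.1)) := by
        rw [← h]
    _ = Δ 1 * ((1:A) ⊗ₜ[K] piR K A Δ ε x) := by
        rw [piR_rep hs, hs, Finset.sum_mul]
        refine Finset.sum_congr rfl fun a _ => ?_
        rw [TensorProduct.tmul_sum, Finset.mul_sum]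
        refine Finset.sum_congr rfl fun b _ => ?_
        simp [Algebra.TensorProduct.tmul_mul_tmul, TensorProduct.tmul_smul,
          mul_smul_comm]

/-- `(Π^R ⊗ id) Δ(x) = (1 ⊗ x) Δ(1)` -/
lemma I1 (hB : WeakBialgebra K A Δ ε) (x : A) :
    LinearMap.rTensor A (piR K A Δ ε) (Δ x) = ((1:A) ⊗ₜ[K] x) * Δ 1 := by
  classical
  obtain ⟨s, hs⟩ := TensorProduct.exists_finset (Δ (1:A))
  obtain ⟨t, ht⟩ := TensorProduct.exists_finset (Δ x)
  have step0 : Δ x = ∑ m ∈ t, ∑ a ∈ s, (m.1 * a.1) ⊗ₜ[K] (m.2 * a.2) := by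
    conv_lhs => rw [← mul_comul_one hB x]
    rw [ht, hs, Finset.sum_mul_sum]
    simp [Algebra.TensorProduct.tmul_mul_tmul]
  have step1 : LinearMap.rTensor A (piR K A Δ ε) (Δ x)
      = ∑ m ∈ t, ∑ a ∈ s, ∑ b ∈ s, ε (m.1 * (a.1 * b.2)) • (b.1 ⊗ₜ[K] (m.2 * a.2)) := by
    rw [step0]
    simp only [map_sum, LinearMap.rTensor_tmul]
    refine Finset.sum_congr rfl fun m _ => Finset.sum_congr rfl fun a _ => ?_
    rw [piR_rep hs, TensorProduct.sum_tmul]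
    refine Finset.sum_congr rfl fun b _ => ?_
    rw [TensorProduct.smul_tmul', mul_assoc]
  have step2 : ∀ m : A × A, ∑ a ∈ s, ∑ b ∈ s, ε (m.1 * (a.1 * b.2)) • (b.1 ⊗ₜ[K] (m.2 * a.2))
      = ∑ a ∈ s, a.1 ⊗ₜ[K]
          (m.2 * apFst (K := K) (ε ∘ₗ LinearMap.mulLeft K m.1) (Δ a.2)) := by
    intro m
    have h := congrArg
      (LinearMap.lTensor A (LinearMap.mulLeft K m.2 ∘ₗ apFst (K := K) (ε ∘ₗ LinearMap.mulLeft K m.1)))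
      (patB_assoc hB hs)
    simp only [map_sum, LinearMap.lTensor_tmul, LinearMap.comp_apply, apFst_tmul,
      LinearMap.mulLeft_apply, map_smul, TensorProduct.tmul_smul, smul_smul] at h
    exact h
  have step4 : ∀ v : A,
      ∑ m ∈ t, m.2 * apFst (K := K) (ε ∘ₗ LinearMap.mulLeft K m.1) (Δ v) = x * v := by
    intro v
    obtain ⟨u, hu⟩ := TensorProduct.exists_finset (Δ v)
    have e1 : Δ (x * v) = ∑ m ∈ t, ∑ c ∈ u, (m.1 * c.1) ⊗ₜ[K] (m.2 * c.2) := by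
      rw [hB.comul_mul, ht, hu, Finset.sum_mul_sum]
      simp [Algebra.TensorProduct.tmul_mul_tmul]
    have e2 : x * v = ∑ m ∈ t, ∑ c ∈ u, ε (m.1 * c.1) • (m.2 * c.2) := by
      conv_lhs => rw [← counitL hB (x * v)]
      rw [e1]
      simp
    rw [e2]
    refine Finset.sum_congr rfl fun m _ => ?_
    rw [hu]
    simp [Finset.mul_sum, mul_smul_comm]
  calc LinearMap.rTensor A (piR K A Δ ε) (Δ x)
      = ∑ m ∈ t, ∑ a ∈ s, ∑ b ∈ s, ε (m.1 * (a.1 * b.2)) • (b.1 ⊗ₜ[K] (m.2 * a.2)) := step1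
    _ = ∑ a ∈ s, a.1 ⊗ₜ[K] (∑ m ∈ t,
          m.2 * apFst (K := K) (ε ∘ₗ LinearMap.mulLeft K m.1) (Δ a.2)) := by
        rw [Finset.sum_congr rfl fun m _ => step2 m, Finset.sum_comm]
        refine Finset.sum_congr rfl fun a _ => ?_
        rw [TensorProduct.tmul_sum]
    _ = ∑ a ∈ s, a.1 ⊗ₜ[K] (x * a.2) := by
        refine Finset.sum_congr rfl fun a _ => ?_
        rw [step4]
    _ = ((1:A) ⊗ₜ[K] x) * Δ 1 := by
        rw [hs, Finset.mul_sum]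
        simp [Algebra.TensorProduct.tmul_mul_tmul]

/-- `(id ⊗ Π^L) Δ(x) = Δ(1) (x ⊗ 1)` -/
lemma I1' (hB : WeakBialgebra K A Δ ε) (x : A) :
    LinearMap.lTensor A (piL K A Δ ε) (Δ x) = Δ 1 * (x ⊗ₜ[K] (1:A)) := by
  classical
  obtain ⟨s, hs⟩ := TensorProduct.exists_finset (Δ (1:A))
  obtain ⟨t, ht⟩ := TensorProduct.exists_finset (Δ x)
  have step0 : Δ x = ∑ a ∈ s, ∑ m ∈ t, (a.1 * m.1) ⊗ₜ[K] (a.2 * m.2) := by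
    conv_lhs => rw [← comul_one_mul hB x]
    rw [hs, ht, Finset.sum_mul_sum]
    simp [Algebra.TensorProduct.tmul_mul_tmul]
  have step1 : LinearMap.lTensor A (piL K A Δ ε) (Δ x)
      = ∑ a ∈ s, ∑ m ∈ t, ∑ b ∈ s, ε (b.1 * (a.2 * m.2)) • ((a.1 * m.1) ⊗ₜ[K] b.2) := by
    rw [step0]
    simp only [map_sum, LinearMap.lTensor_tmul]
    refine Finset.sum_congr rfl fun a _ => Finset.sum_congr rfl fun m _ => ?_
    rw [piL_rep hs, TensorProduct.tmul_sum]
    refine Finset.sum_congr rfl fun b _ => ?_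
    rw [TensorProduct.tmul_smul]
  have step2 : ∀ m : A × A, ∑ a ∈ s, ∑ b ∈ s, ε (a.1 * (b.2 * m.2)) • ((b.1 * m.1) ⊗ₜ[K] a.2)
      = ∑ a ∈ s,
          (apSnd (K := K) (ε ∘ₗ LinearMap.mulRight K m.2) (Δ a.1) * m.1) ⊗ₜ[K] a.2 := by
    intro m
    have h := congrArg
      (LinearMap.rTensor A (LinearMap.mulRight K m.1 ∘ₗ apSnd (K := K) (ε ∘ₗ LinearMap.mulRight K m.2)))
      (patB hB hs)
    simp only [map_sum, LinearMap.rTensor_tmul, LinearMap.comp_apply, apSnd_tmul,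
      LinearMap.mulRight_apply, map_smul, TensorProduct.smul_tmul', smul_smul,
      smul_mul_assoc, mul_assoc] at h
    exact h
  have step4 : ∀ v : A,
      ∑ m ∈ t, apSnd (K := K) (ε ∘ₗ LinearMap.mulRight K m.2) (Δ v) * m.1 = v * x := by
    intro v
    obtain ⟨u, hu⟩ := TensorProduct.exists_finset (Δ v)
    have e1 : Δ (v * x) = ∑ c ∈ u, ∑ m ∈ t, (c.1 * m.1) ⊗ₜ[K] (c.2 * m.2) := by
      rw [hB.comul_mul, hu, ht, Finset.sum_mul_sum]
      simp [Algebra.TensorProduct.tmul_mul_tmul]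
    have e2 : v * x = ∑ c ∈ u, ∑ m ∈ t, ε (c.2 * m.2) • (c.1 * m.1) := by
      conv_lhs => rw [← counitR hB (v * x)]
      rw [e1]
      simp
    rw [e2, Finset.sum_comm]
    refine Finset.sum_congr rfl fun m _ => ?_
    rw [hu]
    simp [Finset.sum_mul, smul_mul_assoc]
  calc LinearMap.lTensor A (piL K A Δ ε) (Δ x)
      = ∑ m ∈ t, ∑ a ∈ s, ∑ b ∈ s, ε (a.1 * (b.2 * m.2)) • ((b.1 * m.1) ⊗ₜ[K] a.2) := by
        rw [step1, Finset.sum_comm]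
        refine Finset.sum_congr rfl fun m _ => ?_
        rw [Finset.sum_comm]
    _ = ∑ m ∈ t, ∑ a ∈ s,
          (apSnd (K := K) (ε ∘ₗ LinearMap.mulRight K m.2) (Δ a.1) * m.1) ⊗ₜ[K] a.2 := by
        exact Finset.sum_congr rfl fun m _ => step2 m
    _ = ∑ a ∈ s, (∑ m ∈ t,
          apSnd (K := K) (ε ∘ₗ LinearMap.mulRight K m.2) (Δ a.1) * m.1) ⊗ₜ[K] a.2 := by
        rw [Finset.sum_comm]
        refine Finset.sum_congr rfl fun a _ => ?_
        rw [TensorProduct.sum_tmul]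
    _ = ∑ a ∈ s, (a.1 * x) ⊗ₜ[K] a.2 := by
        refine Finset.sum_congr rfl fun a _ => ?_
        rw [step4]
    _ = Δ 1 * (x ⊗ₜ[K] (1:A)) := by
        rw [hs, Finset.sum_mul]
        simp [Algebra.TensorProduct.tmul_mul_tmul]

end Projections

section Antipode

/-- `Σ S(x₁) Π^L(x₂) = S x` -/
lemma A6c (hA : WeakHopfAlgebra K A Δ ε S) (x : A) :
    LinearMap.mul' K A (TensorProduct.map S (piL K A Δ ε) (Δ x)) = S x := by
  have hπ : piL K A Δ ε = (LinearMap.mul' K A ∘ₗ LinearMap.lTensor A S) ∘ₗ Δ :=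
    LinearMap.ext fun y => (hA.antipode_a y).symm
  rw [hπ]
  have hm := TensorProduct.map_comp S
      (LinearMap.mul' K A ∘ₗ LinearMap.lTensor A S) LinearMap.id Δ
  simp only [LinearMap.comp_id] at hm
  rw [hm]
  have hid : TensorProduct.map (LinearMap.id : A →ₗ[K] A) Δ = LinearMap.lTensor A Δ := rfl
  rw [LinearMap.comp_apply, hid]
  exact hA.antipode_c x

/-- `Σ Π^R(x₁) S(x₂) = S x` -/
lemma A6b (hA : WeakHopfAlgebra K A Δ ε S) (x : A) :
    LinearMap.mul' K A (TensorProduct.map (piR K A Δ ε) S (Δ x)) = S x := by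
  have hπ : piR K A Δ ε = (LinearMap.mul' K A ∘ₗ LinearMap.rTensor A S) ∘ₗ Δ :=
    LinearMap.ext fun y => (hA.antipode_b y).symm
  rw [hπ]
  have hm := TensorProduct.map_comp (LinearMap.mul' K A ∘ₗ LinearMap.rTensor A S) S
      Δ LinearMap.id
  simp only [LinearMap.comp_id] at hm
  rw [hm]
  have hid : TensorProduct.map Δ (LinearMap.id : A →ₗ[K] A) = LinearMap.rTensor A Δ := rfl
  rw [LinearMap.comp_apply, hid]
  have key : (LinearMap.mul' K A) ∘ₗ
        TensorProduct.map (LinearMap.mul' K A ∘ₗ LinearMap.rTensor A S) S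
      = ((LinearMap.mul' K A) ∘ₗ
          TensorProduct.map S (LinearMap.mul' K A ∘ₗ LinearMap.lTensor A S)) ∘ₗ
            (TensorProduct.assoc K A A A).toLinearMap := by
    apply TensorProduct.ext_threefold
    intro a b c
    simp [mul_assoc]
  have hkey := LinearMap.congr_fun key (Δ.rTensor A (Δ x))
  simp only [LinearMap.comp_apply, LinearEquiv.coe_toLinearMap] at hkey
  rw [hkey, hA.toWeakBialgebra.coassoc x]
  exact hA.antipode_c x

lemma eps_piR (hB : WeakBialgebra K A Δ ε) (x : A) :
    ε (piR K A Δ ε x) = ε x := by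
  classical
  obtain ⟨s, hs⟩ := TensorProduct.exists_finset (Δ (1:A))
  have h := hB.weak_counit_b x 1 1
  rw [hs] at h
  simp only [mul_one, map_sum, TensorProduct.map_tmul, LinearMap.comp_apply,
    LinearMap.mulRight_apply, LinearMap.mulLeft_apply, LinearMap.mul'_apply, mul_one] at h
  rw [piR_rep hs, map_sum]
  simp only [map_smul, smul_eq_mul]
  rw [h]
  exact Finset.sum_congr rfl fun a _ => mul_comm _ _

lemma eps_piL (hB : WeakBialgebra K A Δ ε) (x : A) :
    ε (piL K A Δ ε x) = ε x := by
  classical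
  obtain ⟨s, hs⟩ := TensorProduct.exists_finset (Δ (1:A))
  have h := hB.weak_counit_b 1 1 x
  rw [hs] at h
  simp only [one_mul, mul_one, map_sum, TensorProduct.map_tmul, LinearMap.comp_apply,
    LinearMap.mulRight_apply, LinearMap.mulLeft_apply, LinearMap.mul'_apply] at h
  rw [piL_rep hs, map_sum]
  simp only [map_smul, smul_eq_mul]
  rw [h]

/-- `ε ∘ S = ε` -/
lemma epsS (hA : WeakHopfAlgebra K A Δ ε S) (x : A) : ε (S x) = ε x := by
  classical
  have hB := hA.toWeakBialgebra
  obtain ⟨t, ht⟩ := TensorProduct.exists_finset (Δ x)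
  have h1 : S x = ∑ m ∈ t, S m.1 * piL K A Δ ε m.2 := by
    have h := A6c hA x
    rw [ht] at h
    simpa [map_sum] using h.symm
  have h2 : ∀ p q : A, ε (S p * piL K A Δ ε q) = ε (S p * q) := by
    intro p q
    obtain ⟨s, hs⟩ := TensorProduct.exists_finset (Δ (1:A))
    have hw := hB.weak_counit_b (S p) 1 q
    rw [hs] at hw
    simp only [mul_one, map_sum, TensorProduct.map_tmul, LinearMap.comp_apply,
      LinearMap.mulRight_apply, LinearMap.mulLeft_apply, LinearMap.mul'_apply] at hw
    rw [piL_rep hs, Finset.mul_sum, map_sum]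
    simp only [mul_smul_comm, map_smul, smul_eq_mul]
    rw [← hw]
  have h4 : ∑ m ∈ t, S m.1 * m.2 = piR K A Δ ε x := by
    have h := hA.antipode_b x
    rw [ht] at h
    simpa [map_sum] using h
  calc ε (S x) = ∑ m ∈ t, ε (S m.1 * piL K A Δ ε m.2) := by rw [h1, map_sum]
    _ = ∑ m ∈ t, ε (S m.1 * m.2) := Finset.sum_congr rfl fun m _ => h2 m.1 m.2
    _ = ε (piR K A Δ ε x) := by rw [← h4, map_sum]
    _ = ε x := eps_piR hB x

end Antipode

section Integrals

/-- For a right integral `r`: `Δ(r)(x ⊗ 1) = Δ(r)(1 ⊗ S(x))`. -/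
lemma intR (hA : WeakHopfAlgebra K A Δ ε S) {r : A}
    (hr : ∀ y : A, r * y = r * piR K A Δ ε y) (x : A) :
    Δ r * (x ⊗ₜ[K] (1:A)) = Δ r * ((1:A) ⊗ₜ[K] S x) := by
  classical
  have hB := hA.toWeakBialgebra
  obtain ⟨t, ht⟩ := TensorProduct.exists_finset (Δ x)
  have R0 : ∀ v : A, Δ r * Δ v = Δ r * ((1:A) ⊗ₜ[K] piR K A Δ ε v) := by
    intro v
    have h1 : Δ r * Δ v = Δ r * Δ (piR K A Δ ε v) := by
      rw [← hB.comul_mul, ← hB.comul_mul, ← hr v]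
    rw [h1, I2' hB v, ← mul_assoc, mul_comul_one hB r]
  have haux : ∀ (w : A) (u : A ⊗[K] A),
      (LinearMap.lTensor A (LinearMap.mul' K A ∘ₗ LinearMap.lTensor A S))
        ((TensorProduct.assoc K A A A) (u ⊗ₜ[K] w)) = u * ((1:A) ⊗ₜ[K] S w) := by
    intro w u
    induction u using TensorProduct.induction_on with
    | zero => rw [TensorProduct.zero_tmul, assoc_zero, map_zero, zero_mul]
    | tmul a b => simp [Algebra.TensorProduct.tmul_mul_tmul]
    | add u v hu hv =>
        rw [TensorProduct.add_tmul, assoc_add, map_add, hu, hv, add_mul]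
  have hCL : ∑ m ∈ t, Δ m.1 * ((1:A) ⊗ₜ[K] S m.2)
      = LinearMap.lTensor A (piL K A Δ ε) (Δ x) := by
    have h1 : ∑ m ∈ t, Δ m.1 * ((1:A) ⊗ₜ[K] S m.2)
        = (LinearMap.lTensor A (LinearMap.mul' K A ∘ₗ LinearMap.lTensor A S))
            ((TensorProduct.assoc K A A A) (Δ.rTensor A (Δ x))) := by
      rw [rT_canon ht, assoc_sum, map_sum]
      exact Finset.sum_congr rfl fun m _ => (haux m.2 (Δ m.1)).symm
    rw [h1, hB.coassoc x]
    have h2 := LinearMap.congr_fun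
      (LinearMap.lTensor_comp A (LinearMap.mul' K A ∘ₗ LinearMap.lTensor A S) Δ) (Δ x)
    rw [LinearMap.comp_apply] at h2
    rw [← h2]
    have h3 : (LinearMap.mul' K A ∘ₗ LinearMap.lTensor A S) ∘ₗ Δ = piL K A Δ ε :=
      LinearMap.ext fun y => hA.antipode_a y
    rw [h3]
  have key1 : ∑ m ∈ t, (Δ r * Δ m.1) * ((1:A) ⊗ₜ[K] S m.2)
      = Δ r * ((1:A) ⊗ₜ[K] S x) := by
    calc ∑ m ∈ t, (Δ r * Δ m.1) * ((1:A) ⊗ₜ[K] S m.2)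
        = ∑ m ∈ t, Δ r * (((1:A) ⊗ₜ[K] piR K A Δ ε m.1) * ((1:A) ⊗ₜ[K] S m.2)) := by
          refine Finset.sum_congr rfl fun m _ => ?_
          rw [R0 m.1, mul_assoc]
      _ = Δ r * ((1:A) ⊗ₜ[K] ∑ m ∈ t, piR K A Δ ε m.1 * S m.2) := by
          rw [TensorProduct.tmul_sum, Finset.mul_sum]
          refine Finset.sum_congr rfl fun m _ => ?_
          rw [Algebra.TensorProduct.tmul_mul_tmul, one_mul]
      _ = Δ r * ((1:A) ⊗ₜ[K] S x) := by
          have h := A6b hA x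
          rw [ht] at h
          simp only [map_sum, TensorProduct.map_tmul, LinearMap.mul'_apply] at h
          rw [h]
  have key2 : ∑ m ∈ t, (Δ r * Δ m.1) * ((1:A) ⊗ₜ[K] S m.2)
      = Δ r * (x ⊗ₜ[K] (1:A)) := by
    calc ∑ m ∈ t, (Δ r * Δ m.1) * ((1:A) ⊗ₜ[K] S m.2)
        = Δ r * ∑ m ∈ t, Δ m.1 * ((1:A) ⊗ₜ[K] S m.2) := by
          rw [Finset.mul_sum]
          exact Finset.sum_congr rfl fun m _ => mul_assoc _ _ _
      _ = Δ r * (Δ 1 * (x ⊗ₜ[K] (1:A))) := by rw [hCL, I1' hB x]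
      _ = Δ r * (x ⊗ₜ[K] (1:A)) := by rw [← mul_assoc, mul_comul_one hB r]
  rw [← key2, key1]

/-- For a left integral `l`: `(1 ⊗ x) Δ(l) = (S(x) ⊗ 1) Δ(l)`. -/
lemma intL (hA : WeakHopfAlgebra K A Δ ε S) {l : A}
    (hl : ∀ y : A, y * l = piL K A Δ ε y * l) (x : A) :
    ((1:A) ⊗ₜ[K] x) * Δ l = (S x ⊗ₜ[K] (1:A)) * Δ l := by
  classical
  have hB := hA.toWeakBialgebra
  obtain ⟨t, ht⟩ := TensorProduct.exists_finset (Δ x)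
  have L0 : ∀ v : A, Δ v * Δ l = (piL K A Δ ε v ⊗ₜ[K] (1:A)) * Δ l := by
    intro v
    have h1 : Δ v * Δ l = Δ (piL K A Δ ε v) * Δ l := by
      rw [← hB.comul_mul, ← hB.comul_mul, ← hl v]
    rw [h1, I2 hB v, mul_assoc, comul_one_mul hB l]
  have haux : ∀ (w : A) (u : A ⊗[K] A),
      (LinearMap.rTensor A (LinearMap.mul' K A ∘ₗ LinearMap.rTensor A S))
        ((TensorProduct.assoc K A A A).symm (w ⊗ₜ[K] u)) = (S w ⊗ₜ[K] (1:A)) * u := by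
    intro w u
    induction u using TensorProduct.induction_on with
    | zero => rw [TensorProduct.tmul_zero, assoc_symm_zero, map_zero, mul_zero]
    | tmul a b => simp [Algebra.TensorProduct.tmul_mul_tmul]
    | add u v hu hv =>
        rw [TensorProduct.tmul_add, assoc_symm_add, map_add, hu, hv, mul_add]
  have hCL : ∑ m ∈ t, (S m.1 ⊗ₜ[K] (1:A)) * Δ m.2
      = LinearMap.rTensor A (piR K A Δ ε) (Δ x) := by
    have h1 : ∑ m ∈ t, (S m.1 ⊗ₜ[K] (1:A)) * Δ m.2
        = (LinearMap.rTensor A (LinearMap.mul' K A ∘ₗ LinearMap.rTensor A S))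
            ((TensorProduct.assoc K A A A).symm (Δ.lTensor A (Δ x))) := by
      rw [lT_canon ht, assoc_symm_sum, map_sum]
      exact Finset.sum_congr rfl fun m _ => (haux m.1 (Δ m.2)).symm
    rw [h1, ← hB.coassoc x, LinearEquiv.symm_apply_apply]
    have h2 := LinearMap.congr_fun
      (LinearMap.rTensor_comp A (LinearMap.mul' K A ∘ₗ LinearMap.rTensor A S) Δ) (Δ x)
    rw [LinearMap.comp_apply] at h2
    rw [← h2]
    have h3 : (LinearMap.mul' K A ∘ₗ LinearMap.rTensor A S) ∘ₗ Δ = piR K A Δ ε :=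
      LinearMap.ext fun y => hA.antipode_b y
    rw [h3]
  have key1 : ∑ m ∈ t, (S m.1 ⊗ₜ[K] (1:A)) * (Δ m.2 * Δ l)
      = (S x ⊗ₜ[K] (1:A)) * Δ l := by
    calc ∑ m ∈ t, (S m.1 ⊗ₜ[K] (1:A)) * (Δ m.2 * Δ l)
        = ∑ m ∈ t, ((S m.1 * piL K A Δ ε m.2) ⊗ₜ[K] (1:A)) * Δ l := by
          refine Finset.sum_congr rfl fun m _ => ?_
          rw [L0 m.2, ← mul_assoc, Algebra.TensorProduct.tmul_mul_tmul, one_mul]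
      _ = ((∑ m ∈ t, S m.1 * piL K A Δ ε m.2) ⊗ₜ[K] (1:A)) * Δ l := by
          rw [TensorProduct.sum_tmul, Finset.sum_mul]
      _ = (S x ⊗ₜ[K] (1:A)) * Δ l := by
          have h := A6c hA x
          rw [ht] at h
          simp only [map_sum, TensorProduct.map_tmul, LinearMap.mul'_apply] at h
          rw [h]
  have key2 : ∑ m ∈ t, (S m.1 ⊗ₜ[K] (1:A)) * (Δ m.2 * Δ l)
      = ((1:A) ⊗ₜ[K] x) * Δ l := by
    calc ∑ m ∈ t, (S m.1 ⊗ₜ[K] (1:A)) * (Δ m.2 * Δ l)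
        = (∑ m ∈ t, (S m.1 ⊗ₜ[K] (1:A)) * Δ m.2) * Δ l := by
          rw [Finset.sum_mul]
          exact Finset.sum_congr rfl fun m _ => (mul_assoc _ _ _).symm
      _ = (((1:A) ⊗ₜ[K] x) * Δ 1) * Δ l := by rw [hCL, I1 hB x]
      _ = ((1:A) ⊗ₜ[K] x) * Δ l := by rw [mul_assoc, comul_one_mul hB l]
  rw [← key2, key1]

end Integrals

section ApSndCalc

variable (φ : A →ₗ[K] K)

lemma apSnd_comp (f : A →ₗ[K] A) (u : A ⊗[K] A) :
    apSnd (φ ∘ₗ f) u = apSnd (K := K) φ (LinearMap.lTensor A f u) := by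
  induction u using TensorProduct.induction_on with
  | zero => simp
  | tmul a b => simp
  | add u v hu hv => rw [map_add, map_add, map_add, hu, hv]

lemma apSnd_one_tmul_mul (y : A) (u : A ⊗[K] A) :
    apSnd (K := K) φ (((1:A) ⊗ₜ[K] y) * u) = apSnd (φ ∘ₗ LinearMap.mulLeft K y) u := by
  induction u using TensorProduct.induction_on with
  | zero => simp
  | tmul a b => simp [Algebra.TensorProduct.tmul_mul_tmul]
  | add u v hu hv => rw [mul_add, map_add, map_add, hu, hv]

lemma apSnd_tmul_one_mul (y : A) (u : A ⊗[K] A) :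
    apSnd (K := K) φ ((y ⊗ₜ[K] (1:A)) * u) = y * apSnd (K := K) φ u := by
  induction u using TensorProduct.induction_on with
  | zero => simp
  | tmul a b => simp [Algebra.TensorProduct.tmul_mul_tmul, mul_smul_comm]
  | add u v hu hv => rw [mul_add, map_add, map_add, hu, hv, mul_add]

lemma apSnd_mul_one_tmul (y : A) (u : A ⊗[K] A) :
    apSnd (K := K) φ (u * ((1:A) ⊗ₜ[K] y)) = apSnd (φ ∘ₗ LinearMap.mulRight K y) u := by
  induction u using TensorProduct.induction_on with
  | zero => simp
  | tmul a b => simp [Algebra.TensorProduct.tmul_mul_tmul]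
  | add u v hu hv => rw [add_mul, map_add, map_add, hu, hv]

lemma apSnd_mul_tmul_one (y : A) (u : A ⊗[K] A) :
    apSnd (K := K) φ (u * (y ⊗ₜ[K] (1:A))) = apSnd (K := K) φ u * y := by
  induction u using TensorProduct.induction_on with
  | zero => simp
  | tmul a b => simp [Algebra.TensorProduct.tmul_mul_tmul, smul_mul_assoc]
  | add u v hu hv => rw [add_mul, map_add, map_add, hu, hv, add_mul]

end ApSndCalc

end WHAaux

open WHAaux in
/-- If a weak Hopf algebra `A` contains a nondegenerate two-sided
integral, then every two-sided integral `i ∈ A` is `S`-invariant: `S(i) = i`. -/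
theorem weakHopfAlgebra_twoSided_integrals_S_invariant
    (K : Type*) [Field K] (A : Type*) [Ring A] [Algebra K A] [FiniteDimensional K A]
    (Δ : A →ₗ[K] A ⊗[K] A) (ε : A →ₗ[K] K) (S : A →ₗ[K] A)
    (hA : WeakHopfAlgebra K A Δ ε S)
    (j : A)
    (hjl : ∀ x : A, x * j = piL K A Δ ε x * j)
    (hjr : ∀ x : A, j * x = j * piR K A Δ ε x)
    (hjnd : Function.Bijective
      (fun φ : A →ₗ[K] K => (TensorProduct.rid K A) (LinearMap.lTensor A φ (Δ j)))) :
    ∀ i : A, (∀ x : A, x * i = piL K A Δ ε x * i) →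
      (∀ x : A, i * x = i * piR K A Δ ε x) → S i = i := by
  classical
  intro i hil hir
  have hB := hA.toWeakBialgebra
  obtain ⟨sj, hsj⟩ := TensorProduct.exists_finset (Δ j)
  obtain ⟨s1, hs1⟩ := TensorProduct.exists_finset (Δ (1:A))
  -- the nondegeneracy map, rewritten through `apSnd`
  have hfun : ∀ φ : A →ₗ[K] K,
      (TensorProduct.rid K A) (LinearMap.lTensor A φ (Δ j)) = apSnd (K := K) φ (Δ j) :=
    fun φ => rfl
  -- the intertwining properties
  have P1 : ∀ (φ : A →ₗ[K] K) (x : A),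
      apSnd (φ ∘ₗ LinearMap.mulLeft K x) (Δ j) = S x * apSnd (K := K) φ (Δ j) := by
    intro φ x
    rw [← apSnd_one_tmul_mul, intL hA hjl x, apSnd_tmul_one_mul]
  have P2 : ∀ (φ : A →ₗ[K] K) (x : A),
      apSnd (φ ∘ₗ LinearMap.mulRight K (S x)) (Δ j) = apSnd (K := K) φ (Δ j) * x := by
    intro φ x
    rw [← apSnd_mul_one_tmul, ← intR hA hjr x, apSnd_mul_tmul_one]
  have P2i : ∀ (φ : A →ₗ[K] K) (x : A),
      apSnd (φ ∘ₗ LinearMap.mulRight K (S x)) (Δ i) = apSnd (K := K) φ (Δ i) * x := by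
    intro φ x
    rw [← apSnd_mul_one_tmul, ← intR hA hir x, apSnd_mul_tmul_one]
  -- evaluation of ε on the nondegeneracy map
  have hεΦ : ∀ φ : A →ₗ[K] K, ε (apSnd (K := K) φ (Δ j)) = φ j := by
    intro φ
    have hj1 : apFst (K := K) ε (Δ j) = j := counitL hB j
    calc ε (apSnd (K := K) φ (Δ j)) = ∑ p ∈ sj, φ p.2 * ε p.1 := by
          rw [hsj, map_sum, map_sum]
          simp [smul_eq_mul]
      _ = φ (∑ p ∈ sj, ε p.1 • p.2) := by
          rw [map_sum]
          simp only [map_smul, smul_eq_mul]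
          exact Finset.sum_congr rfl fun p _ => mul_comm _ _
      _ = φ j := by rw [← hj1, hsj, map_sum]; simp
  -- the dual of the nondegenerate integral
  obtain ⟨lam, hlam0⟩ := hjnd.2 1
  have hlam : apSnd (K := K) lam (Δ j) = 1 := hlam0
  -- the candidate inverse of S
  set Tm : A →ₗ[K] A :=
    { toFun := fun w => ∑ p ∈ sj, lam (p.2 * w) • p.1
      map_add' := by
        intro w w'
        simp [mul_add, add_smul, Finset.sum_add_distrib]
      map_smul' := by
        intro c w
        simp [mul_smul_comm, smul_smul, Finset.smul_sum, mul_comm] } with hTmdef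
  have hTm : ∀ w : A, Tm w = apSnd (lam ∘ₗ LinearMap.mulRight K w) (Δ j) := by
    intro w
    show ∑ p ∈ sj, lam (p.2 * w) • p.1 = _
    rw [hsj, map_sum]
    simp
  have hTS : ∀ x : A, Tm (S x) = x := by
    intro x
    rw [hTm, P2 lam x, hlam, one_mul]
  have Tinj : Function.Injective Tm :=
    LinearMap.injective_iff_surjective.mpr fun x => ⟨S x, hTS x⟩
  -- `lam (x * j) = ε x`
  have L11 : ∀ x : A, lam (x * j) = ε x := by
    intro x
    have h := congrArg ε (P1 lam x)
    rw [hεΦ, hlam, mul_one, epsS hA] at h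
    simpa using h
  -- `ε = lam ∘ (· * S j)`
  have hεlam : (ε : A →ₗ[K] K) = lam ∘ₗ LinearMap.mulRight K (S j) := by
    apply hjnd.1
    show apSnd (K := K) ε (Δ j) = apSnd (lam ∘ₗ LinearMap.mulRight K (S j)) (Δ j)
    rw [P2 lam j, hlam, one_mul]
    exact counitR hB j
  -- `i = c * j`
  set c : A := apSnd (K := K) lam (Δ i) with hcdef
  have hic : i = c * j := by
    have h1 : i = apSnd (K := K) ε (Δ i) := (counitR hB i).symm
    rw [h1, hεlam, P2i lam j]
  -- computation of `Tm i`
  have hψ : (lam ∘ₗ LinearMap.mulRight K i)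
      = (lam ∘ₗ LinearMap.mulRight K i) ∘ₗ piL K A Δ ε := by
    apply LinearMap.ext
    intro y
    show lam (y * i) = lam (piL K A Δ ε y * i)
    rw [← hil y]
  have hTi1 : Tm i = ∑ a ∈ s1, lam (a.2 * i) • (a.1 * j) := by
    rw [hTm, hψ, apSnd_comp, I1' hB j, hs1, Finset.sum_mul, map_sum]
    refine Finset.sum_congr rfl fun a _ => ?_
    rw [Algebra.TensorProduct.tmul_mul_tmul, mul_one]
    simp
  have hlam2 : ∀ y : A, lam (y * i) = ε (y * c) := by
    intro y
    rw [hic, ← mul_assoc, L11]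
  -- the element d
  set d : A := ∑ a ∈ s1, ε (a.2 * c) • a.1 with hddef
  have hTi2 : Tm i = d * j := by
    rw [hTi1, hddef, Finset.sum_mul]
    refine Finset.sum_congr rfl fun a _ => ?_
    rw [hlam2, smul_mul_assoc]
  -- `d * j = c * j`
  have hεd : ∀ y : A, ε (y * d) = ε (y * c) := by
    intro y
    have hwa := hB.weak_counit_a y 1 c
    rw [hs1] at hwa
    simp only [mul_one, one_mul, map_sum, TensorProduct.map_tmul, LinearMap.comp_apply,
      LinearMap.mulLeft_apply, LinearMap.mulRight_apply, LinearMap.mul'_apply] at hwa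
    rw [hddef, Finset.mul_sum, map_sum]
    simp only [mul_smul_comm, map_smul, smul_eq_mul]
    rw [hwa]
    exact Finset.sum_congr rfl fun a _ => mul_comm _ _
  have hdc : Tm (d * j) = Tm (c * j) := by
    show ∑ p ∈ sj, lam (p.2 * (d * j)) • p.1 = ∑ p ∈ sj, lam (p.2 * (c * j)) • p.1
    refine Finset.sum_congr rfl fun p _ => ?_
    rw [← mul_assoc, ← mul_assoc, L11, L11, hεd]
  have hdj : d * j = c * j := Tinj hdc
  have hTi : Tm i = i := by rw [hTi2, hdj, ← hic]
  -- conclusion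
  have : Tm (S i) = Tm i := by rw [hTS i, hTi]
  exact Tinj this
end
end

section
/- Let A be a weak Hopf algebra over a field K. (a) A left integral l in A is a Haar integral if and only if Π^R(l) = 1. (b) If a Haar integral h exists then it is unique (any two Haar integrals are equal), idempotent (h·h = h), S-invariant (S(h) = h), and nondegenerate (the map A* → A, φ ↦ Σ h₍₁₎ φ(h₍₂₎), is bijective). -/
open TensorProduct

noncomputable section

variable (K : Type*) [Field K] (A : Type*) [Ring A] [Algebra K A]

namespace WHA18

open TensorProduct LinearMap Finset

variable {K : Type*} [Field K] {A : Type*} [Ring A] [Algebra K A]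

section Slices

variable (ε : A →ₗ[K] K)

/-- slice `a ⊗ m ↦ ε a • m`. -/
def sF (M : Type*) [AddCommGroup M] [Module K M] : A ⊗[K] M →ₗ[K] M :=
  (TensorProduct.lid K M).toLinearMap ∘ₗ ε.rTensor M

/-- slice `m ⊗ a ↦ ε a • m`. -/
def sS (M : Type*) [AddCommGroup M] [Module K M] : M ⊗[K] A →ₗ[K] M :=
  (TensorProduct.rid K M).toLinearMap ∘ₗ ε.lTensor M

@[simp] lemma sF_tmul (M : Type*) [AddCommGroup M] [Module K M] (a : A) (m : M) :
    sF ε M (a ⊗ₜ[K] m) = ε a • m := by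
  simp [sF]

@[simp] lemma sS_tmul (M : Type*) [AddCommGroup M] [Module K M] (a : A) (m : M) :
    sS ε M (m ⊗ₜ[K] a) = ε a • m := by
  simp [sS]

/-- weighted slice `a ⊗ m ↦ ε (a * b) • m`. -/
def wF (b : A) (M : Type*) [AddCommGroup M] [Module K M] : A ⊗[K] M →ₗ[K] M :=
  sF ε M ∘ₗ (LinearMap.mulRight K b).rTensor M

/-- weighted slice `m ⊗ a ↦ ε (b * a) • m`. -/
def wS (b : A) (M : Type*) [AddCommGroup M] [Module K M] : M ⊗[K] A →ₗ[K] M :=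
  sS ε M ∘ₗ (LinearMap.mulLeft K b).lTensor M

@[simp] lemma wF_tmul (b : A) (M : Type*) [AddCommGroup M] [Module K M] (a : A) (m : M) :
    wF ε b M (a ⊗ₜ[K] m) = ε (a * b) • m := by
  simp [wF]

@[simp] lemma wS_tmul (b : A) (M : Type*) [AddCommGroup M] [Module K M] (a : A) (m : M) :
    wS ε b M (m ⊗ₜ[K] a) = ε (b * a) • m := by
  simp [wS]

end Slices

section Assoc

/-- The linear associator agrees with the algebra associator. -/
lemma assoc_eq_alg (t : (A ⊗[K] A) ⊗[K] A) :
    (TensorProduct.assoc K A A A) t = Algebra.TensorProduct.assoc K K K A A A t := rfl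

lemma assoc_mul (t u : (A ⊗[K] A) ⊗[K] A) :
    (TensorProduct.assoc K A A A) (t * u) =
      (TensorProduct.assoc K A A A) t * (TensorProduct.assoc K A A A) u := by
  simp only [assoc_eq_alg, map_mul]

lemma assoc_symm_mul (t u : A ⊗[K] (A ⊗[K] A)) :
    (TensorProduct.assoc K A A A).symm (t * u) =
      (TensorProduct.assoc K A A A).symm t * (TensorProduct.assoc K A A A).symm u := by
  have h : ∀ v : A ⊗[K] (A ⊗[K] A),
      (TensorProduct.assoc K A A A).symm v = (Algebra.TensorProduct.assoc K K K A A A).symm v :=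
    fun v => rfl
  simp only [h, map_mul]

/-- `TensorProduct.map f g` is multiplicative if `f` and `g` are. -/
lemma map_mul_of {B C : Type*} [Ring B] [Algebra K B] [Ring C] [Algebra K C]
    (f : A →ₗ[K] B) (g : A →ₗ[K] C) (hf : ∀ a b, f (a * b) = f a * f b)
    (hg : ∀ a b, g (a * b) = g a * g b) (t u : A ⊗[K] A) :
    TensorProduct.map f g (t * u) = TensorProduct.map f g t * TensorProduct.map f g u := by
  induction t using TensorProduct.induction_on with
  | zero => simp
  | tmul a b =>
    induction u using TensorProduct.induction_on with
    | zero => simp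
    | tmul c d => simp [Algebra.TensorProduct.tmul_mul_tmul, hf, hg]
    | add u₁ u₂ h₁ h₂ => simp [mul_add, h₁, h₂]
  | add t₁ t₂ h₁ h₂ => simp [add_mul, h₁, h₂]

end Assoc

end WHA18

namespace WHA18

open TensorProduct LinearMap Finset

variable {K : Type*} [Field K] {A : Type*} [Ring A] [Algebra K A]

section WBA

variable (Δ : A →ₗ[K] A ⊗[K] A) (ε : A →ₗ[K] K)

/-- A representation of `Δ a` as a finite sum of pure tensors. -/
def Rp (a : A) : Finset (A × A) := (TensorProduct.exists_finset (Δ a)).choose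

lemma Rp_spec (a : A) : Δ a = ∑ p ∈ Rp Δ a, p.1 ⊗ₜ[K] p.2 :=
  (TensorProduct.exists_finset (Δ a)).choose_spec

lemma counitF (hB : WeakBialgebra K A Δ ε) (x : A) : sF ε A (Δ x) = x := hB.counit_left x

lemma counitS (hB : WeakBialgebra K A Δ ε) (x : A) : sS ε A (Δ x) = x := hB.counit_right x

lemma piL_eq (x : A) : piL K A Δ ε x = sF ε A (Δ 1 * (x ⊗ₜ[K] 1)) := rfl

lemma piR_eq (x : A) : piR K A Δ ε x = sS ε A ((1 ⊗ₜ[K] x) * Δ 1) := rfl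

lemma piL_rep (x : A) : piL K A Δ ε x = ∑ p ∈ Rp Δ 1, ε (p.1 * x) • p.2 := by
  rw [piL_eq, Rp_spec Δ 1, Finset.sum_mul]
  rw [map_sum]
  refine Finset.sum_congr rfl fun p _ => ?_
  simp [Algebra.TensorProduct.tmul_mul_tmul]

lemma piR_rep (x : A) : piR K A Δ ε x = ∑ p ∈ Rp Δ 1, ε (x * p.2) • p.1 := by
  rw [piR_eq, Rp_spec Δ 1, Finset.mul_sum]
  rw [map_sum]
  refine Finset.sum_congr rfl fun p _ => ?_
  simp [Algebra.TensorProduct.tmul_mul_tmul]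

lemma D1_mul (hB : WeakBialgebra K A Δ ε) (x : A) : Δ 1 * Δ x = Δ x := by
  rw [← hB.comul_mul, one_mul]

lemma mul_D1 (hB : WeakBialgebra K A Δ ε) (x : A) : Δ x * Δ 1 = Δ x := by
  rw [← hB.comul_mul, mul_one]

lemma piL_one (hB : WeakBialgebra K A Δ ε) : piL K A Δ ε 1 = 1 := by
  rw [piL_eq]
  have : ((1 : A) ⊗ₜ[K] (1 : A)) = (1 : A ⊗[K] A) := rfl
  rw [this, mul_one, counitF Δ ε hB]

lemma piR_one (hB : WeakBialgebra K A Δ ε) : piR K A Δ ε 1 = 1 := by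
  rw [piR_eq]
  have : ((1 : A) ⊗ₜ[K] (1 : A)) = (1 : A ⊗[K] A) := rfl
  rw [this, one_mul, counitS Δ ε hB]

/-- `ε (a * Π^L b) = ε (a b)`. -/
lemma eps_mul_piL (hB : WeakBialgebra K A Δ ε) (a b : A) : ε (a * piL K A Δ ε b) = ε (a * b) := by
  have hw := hB.weak_counit_b a 1 b
  rw [mul_one, Rp_spec Δ 1] at hw
  simp only [map_sum, TensorProduct.map_tmul, LinearMap.mul'_apply, LinearMap.coe_comp,
    Function.comp_apply, LinearMap.mulRight_apply, LinearMap.mulLeft_apply] at hw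
  rw [piL_rep Δ ε, Finset.mul_sum, map_sum, hw]
  refine Finset.sum_congr rfl fun p _ => ?_
  simp [mul_smul_comm, smul_eq_mul, mul_comm]

/-- `ε (Π^R a * b) = ε (a b)`. -/
lemma eps_piR_mul (hB : WeakBialgebra K A Δ ε) (a b : A) : ε (piR K A Δ ε a * b) = ε (a * b) := by
  have hw := hB.weak_counit_b a 1 b
  rw [mul_one, Rp_spec Δ 1] at hw
  simp only [map_sum, TensorProduct.map_tmul, LinearMap.mul'_apply, LinearMap.coe_comp,
    Function.comp_apply, LinearMap.mulRight_apply, LinearMap.mulLeft_apply] at hw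
  rw [piR_rep Δ ε, Finset.sum_mul, map_sum, hw]
  refine Finset.sum_congr rfl fun p _ => ?_
  simp [smul_mul_assoc, smul_eq_mul, mul_comm]

lemma piL_mul_piL (hB : WeakBialgebra K A Δ ε) (a b : A) : piL K A Δ ε (a * piL K A Δ ε b) = piL K A Δ ε (a * b) := by
  rw [piL_rep Δ ε (a * piL K A Δ ε b), piL_rep Δ ε (a * b)]
  refine Finset.sum_congr rfl fun p _ => ?_
  rw [← mul_assoc, eps_mul_piL Δ ε hB, mul_assoc]

lemma piR_piR_mul (hB : WeakBialgebra K A Δ ε) (a b : A) : piR K A Δ ε (piR K A Δ ε a * b) = piR K A Δ ε (a * b) := by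
  rw [piR_rep Δ ε (piR K A Δ ε a * b), piR_rep Δ ε (a * b)]
  refine Finset.sum_congr rfl fun p _ => ?_
  rw [mul_assoc, eps_piR_mul Δ ε hB, ← mul_assoc]

end WBA

end WHA18

namespace WHA18

open TensorProduct LinearMap Finset

set_option synthInstance.maxHeartbeats 1000000
set_option maxHeartbeats 1000000

variable {K : Type*} [Field K] {A : Type*} [Ring A] [Algebra K A]

section WBA2

variable (Δ : A →ₗ[K] A ⊗[K] A) (ε : A →ₗ[K] K)

local notation "𝔞" => TensorProduct.assoc K A A A

lemma coassoc_symm (hB : WeakBialgebra K A Δ ε) (x : A) :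
    Δ.rTensor A (Δ x) = (𝔞).symm (Δ.lTensor A (Δ x)) := by
  rw [← hB.coassoc x, LinearEquiv.symm_apply_apply]

lemma D2l1_a (hB : WeakBialgebra K A Δ ε) :
    Δ.lTensor A (Δ 1) = (𝔞 (Δ 1 ⊗ₜ[K] (1 : A))) * ((1 : A) ⊗ₜ[K] Δ 1) := by
  rw [← hB.coassoc 1, hB.weak_comul_unit_a, assoc_mul, LinearEquiv.apply_symm_apply]

lemma D2l1_b (hB : WeakBialgebra K A Δ ε) :
    Δ.lTensor A (Δ 1) = ((1 : A) ⊗ₜ[K] Δ 1) * (𝔞 (Δ 1 ⊗ₜ[K] (1 : A))) := by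
  rw [← hB.coassoc 1, hB.weak_comul_unit_b, assoc_mul, LinearEquiv.apply_symm_apply]

lemma lT_D1 : LinearMap.lTensor A Δ (Δ 1) = ∑ p ∈ Rp Δ 1, p.1 ⊗ₜ[K] Δ p.2 := by
  rw [Rp_spec Δ 1, map_sum]
  exact Finset.sum_congr rfl fun p _ => by simp

lemma rT_D1 : Δ.rTensor A (Δ 1) = ∑ p ∈ Rp Δ 1, Δ p.1 ⊗ₜ[K] p.2 := by
  rw [Rp_spec Δ 1, map_sum]
  exact Finset.sum_congr rfl fun p _ => by simp

lemma alpha_D1 : 𝔞 (Δ 1 ⊗ₜ[K] (1 : A)) = ∑ p ∈ Rp Δ 1, p.1 ⊗ₜ[K] (p.2 ⊗ₜ[K] (1 : A)) := by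
  rw [Rp_spec Δ 1, TensorProduct.sum_tmul, map_sum]
  exact Finset.sum_congr rfl fun p _ => by simp

lemma alpha_symm_D1 :
    (𝔞).symm ((1 : A) ⊗ₜ[K] Δ 1) = ∑ p ∈ Rp Δ 1, ((1 : A) ⊗ₜ[K] p.1) ⊗ₜ[K] p.2 := by
  rw [Rp_spec Δ 1, TensorProduct.tmul_sum, map_sum]
  exact Finset.sum_congr rfl fun p _ => by simp

/-- `Δ(Π^L x) = (Π^L x ⊗ 1) Δ1`. -/
lemma comul_piL_r (hB : WeakBialgebra K A Δ ε) (x : A) :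
    Δ (piL K A Δ ε x) = (piL K A Δ ε x ⊗ₜ[K] (1 : A)) * Δ 1 := by
  have h1 : Δ (piL K A Δ ε x) = wF ε x (A ⊗[K] A) (LinearMap.lTensor A Δ (Δ 1)) := by
    rw [piL_rep, lT_D1, map_sum, map_sum]
    exact Finset.sum_congr rfl fun p _ => by simp
  rw [h1, D2l1_a Δ ε hB, alpha_D1, Finset.sum_mul, map_sum]
  rw [Finset.sum_congr rfl fun (p : A × A) _ => show
      wF ε x (A ⊗[K] A) ((p.1 ⊗ₜ[K] (p.2 ⊗ₜ[K] (1:A))) * ((1:A) ⊗ₜ[K] Δ 1))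
      = ε (p.1 * x) • ((p.2 ⊗ₜ[K] (1:A)) * Δ 1) by
    rw [Algebra.TensorProduct.tmul_mul_tmul, mul_one, wF_tmul]]
  rw [piL_rep Δ ε, TensorProduct.sum_tmul, Finset.sum_mul]
  exact Finset.sum_congr rfl fun p _ => by rw [← TensorProduct.smul_tmul', smul_mul_assoc]

/-- `Δ(Π^L x) = Δ1 (Π^L x ⊗ 1)`. -/
lemma comul_piL_l (hB : WeakBialgebra K A Δ ε) (x : A) :
    Δ (piL K A Δ ε x) = Δ 1 * (piL K A Δ ε x ⊗ₜ[K] (1 : A)) := by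
  have h1 : Δ (piL K A Δ ε x) = wF ε x (A ⊗[K] A) (LinearMap.lTensor A Δ (Δ 1)) := by
    rw [piL_rep, lT_D1, map_sum, map_sum]
    exact Finset.sum_congr rfl fun p _ => by simp
  rw [h1, D2l1_b Δ ε hB, alpha_D1, Finset.mul_sum, map_sum]
  rw [Finset.sum_congr rfl fun (p : A × A) _ => show
      wF ε x (A ⊗[K] A) (((1:A) ⊗ₜ[K] Δ 1) * (p.1 ⊗ₜ[K] (p.2 ⊗ₜ[K] (1:A))))
      = ε (p.1 * x) • (Δ 1 * (p.2 ⊗ₜ[K] (1:A))) by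
    rw [Algebra.TensorProduct.tmul_mul_tmul, one_mul, wF_tmul]]
  rw [piL_rep Δ ε, TensorProduct.sum_tmul, Finset.mul_sum]
  exact Finset.sum_congr rfl fun p _ => by rw [← TensorProduct.smul_tmul', mul_smul_comm]

/-- `Δ(Π^R x) = Δ1 (1 ⊗ Π^R x)`. -/
lemma comul_piR_l (hB : WeakBialgebra K A Δ ε) (x : A) :
    Δ (piR K A Δ ε x) = Δ 1 * ((1 : A) ⊗ₜ[K] piR K A Δ ε x) := by
  have h1 : Δ (piR K A Δ ε x) = wS ε x (A ⊗[K] A) (Δ.rTensor A (Δ 1)) := by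
    rw [piR_rep, rT_D1, map_sum, map_sum]
    exact Finset.sum_congr rfl fun p _ => by simp
  rw [h1, hB.weak_comul_unit_a, alpha_symm_D1, Finset.mul_sum, map_sum]
  rw [Finset.sum_congr rfl fun (p : A × A) _ => show
      wS ε x (A ⊗[K] A) ((Δ 1 ⊗ₜ[K] (1:A)) * (((1:A) ⊗ₜ[K] p.1) ⊗ₜ[K] p.2))
      = ε (x * p.2) • (Δ 1 * ((1:A) ⊗ₜ[K] p.1)) by
    rw [Algebra.TensorProduct.tmul_mul_tmul, one_mul, wS_tmul]]
  rw [piR_rep Δ ε, TensorProduct.tmul_sum, Finset.mul_sum]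
  refine Finset.sum_congr rfl fun p _ => ?_
  rw [TensorProduct.tmul_smul, mul_smul_comm]

/-- `Δ(Π^R x) = (1 ⊗ Π^R x) Δ1`. -/
lemma comul_piR_r (hB : WeakBialgebra K A Δ ε) (x : A) :
    Δ (piR K A Δ ε x) = ((1 : A) ⊗ₜ[K] piR K A Δ ε x) * Δ 1 := by
  have h1 : Δ (piR K A Δ ε x) = wS ε x (A ⊗[K] A) (Δ.rTensor A (Δ 1)) := by
    rw [piR_rep, rT_D1, map_sum, map_sum]
    exact Finset.sum_congr rfl fun p _ => by simp
  rw [h1, hB.weak_comul_unit_b, alpha_symm_D1, Finset.sum_mul, map_sum]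
  rw [Finset.sum_congr rfl fun (p : A × A) _ => show
      wS ε x (A ⊗[K] A) ((((1:A) ⊗ₜ[K] p.1) ⊗ₜ[K] p.2) * (Δ 1 ⊗ₜ[K] (1:A)))
      = ε (x * p.2) • (((1:A) ⊗ₜ[K] p.1) * Δ 1) by
    rw [Algebra.TensorProduct.tmul_mul_tmul, mul_one, wS_tmul]]
  rw [piR_rep Δ ε, TensorProduct.tmul_sum, Finset.sum_mul]
  refine Finset.sum_congr rfl fun p _ => ?_
  rw [TensorProduct.tmul_smul, smul_mul_assoc]

/-- `A^R` and `A^L` commute. -/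
lemma piR_comm_piL (hB : WeakBialgebra K A Δ ε) (a b : A) :
    piR K A Δ ε a * piL K A Δ ε b = piL K A Δ ε b * piR K A Δ ε a := by
  have h := (comul_piR_r Δ ε hB a).symm.trans (comul_piR_l Δ ε hB a)
  have h2 := congrArg (wF ε b A) h
  have e1 : wF ε b A (((1:A) ⊗ₜ[K] piR K A Δ ε a) * Δ 1)
      = piR K A Δ ε a * piL K A Δ ε b := by
    rw [Rp_spec Δ 1, Finset.mul_sum, map_sum, piL_rep Δ ε, Finset.mul_sum]
    refine Finset.sum_congr rfl fun p _ => ?_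
    rw [Algebra.TensorProduct.tmul_mul_tmul, one_mul, wF_tmul, mul_smul_comm]
  have e2 : wF ε b A (Δ 1 * ((1:A) ⊗ₜ[K] piR K A Δ ε a))
      = piL K A Δ ε b * piR K A Δ ε a := by
    rw [Rp_spec Δ 1, Finset.sum_mul, map_sum, piL_rep Δ ε, Finset.sum_mul]
    refine Finset.sum_congr rfl fun p _ => ?_
    rw [Algebra.TensorProduct.tmul_mul_tmul, mul_one, wF_tmul, smul_mul_assoc]
  rw [e1, e2] at h2
  exact h2

/-- key exchange lemma. -/
lemma Tlem1 (hB : WeakBialgebra K A Δ ε) (x : A) :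
    ∑ p ∈ Rp Δ 1, p.1 ⊗ₜ[K] (Δ x * (p.2 ⊗ₜ[K] (1:A)))
      = ∑ p ∈ Rp Δ 1, p.1 ⊗ₜ[K] Δ (x * p.2) := by
  have e1 : ∑ p ∈ Rp Δ 1, p.1 ⊗ₜ[K] (Δ x * (p.2 ⊗ₜ[K] (1:A)))
      = ((1:A) ⊗ₜ[K] Δ x) * (𝔞 (Δ 1 ⊗ₜ[K] (1 : A))) := by
    rw [alpha_D1, Finset.mul_sum]
    exact Finset.sum_congr rfl fun p _ => by
      rw [Algebra.TensorProduct.tmul_mul_tmul, one_mul]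
  have e2 : ((1:A) ⊗ₜ[K] Δ x) * (𝔞 (Δ 1 ⊗ₜ[K] (1 : A)))
      = ((1:A) ⊗ₜ[K] Δ x) * LinearMap.lTensor A Δ (Δ 1) := by
    conv_lhs => rw [show ((1:A) ⊗ₜ[K] Δ x) = ((1:A) ⊗ₜ[K] Δ x) * ((1:A) ⊗ₜ[K] Δ 1) by
      rw [Algebra.TensorProduct.tmul_mul_tmul, one_mul, mul_D1 Δ ε hB]]
    rw [mul_assoc, ← D2l1_b Δ ε hB]
  rw [e1, e2, lT_D1, Finset.mul_sum]
  refine Finset.sum_congr rfl fun p _ => ?_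
  rw [Algebra.TensorProduct.tmul_mul_tmul, one_mul, ← hB.comul_mul]

lemma Tlem2 (hB : WeakBialgebra K A Δ ε) (y : A) :
    ∑ p ∈ Rp Δ 1, (((1:A) ⊗ₜ[K] p.1) * Δ y) ⊗ₜ[K] p.2
      = ∑ p ∈ Rp Δ 1, Δ (p.1 * y) ⊗ₜ[K] p.2 := by
  have e1 : ∑ p ∈ Rp Δ 1, (((1:A) ⊗ₜ[K] p.1) * Δ y) ⊗ₜ[K] p.2
      = ((𝔞).symm ((1 : A) ⊗ₜ[K] Δ 1)) * (Δ y ⊗ₜ[K] (1:A)) := by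
    rw [alpha_symm_D1, Finset.sum_mul]
    exact Finset.sum_congr rfl fun p _ => by
      rw [Algebra.TensorProduct.tmul_mul_tmul, mul_one]
  have e2 : ((𝔞).symm ((1 : A) ⊗ₜ[K] Δ 1)) * (Δ y ⊗ₜ[K] (1:A))
      = Δ.rTensor A (Δ 1) * (Δ y ⊗ₜ[K] (1:A)) := by
    conv_lhs => rw [show (Δ y ⊗ₜ[K] (1:A)) = (Δ 1 ⊗ₜ[K] (1:A)) * (Δ y ⊗ₜ[K] (1:A)) by
      rw [Algebra.TensorProduct.tmul_mul_tmul, one_mul, D1_mul Δ ε hB]]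
    rw [← mul_assoc, ← hB.weak_comul_unit_b]
  rw [e1, e2, rT_D1, Finset.sum_mul]
  refine Finset.sum_congr rfl fun p _ => ?_
  rw [Algebra.TensorProduct.tmul_mul_tmul, mul_one, ← hB.comul_mul]

end WBA2

end WHA18

namespace WHA18

open TensorProduct LinearMap Finset

set_option synthInstance.maxHeartbeats 1000000
set_option maxHeartbeats 1000000

variable {K : Type*} [Field K] {A : Type*} [Ring A] [Algebra K A]

section WHA

variable (Δ : A →ₗ[K] A ⊗[K] A) (ε : A →ₗ[K] K) (S : A →ₗ[K] A)

local notation "𝔞" => TensorProduct.assoc K A A A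
local notation "μ" => LinearMap.mul' K A

/-- `Σ Π^R(x₁) ⊗ x₂ = (1 ⊗ x) Δ1`. -/
lemma W9 (hB : WeakBialgebra K A Δ ε) (x : A) :
    LinearMap.rTensor A (piR K A Δ ε) (Δ x) = ((1:A) ⊗ₜ[K] x) * Δ 1 := by
  set mSl : (A ⊗[K] A) ⊗[K] A →ₗ[K] A ⊗[K] A := LinearMap.rTensor A (sS ε A) with hmSl
  have key : (𝔞).symm ((1:A) ⊗ₜ[K] Δ x) * (Δ 1 ⊗ₜ[K] (1:A))
      = (𝔞).symm (((1:A) ⊗ₜ[K] Δ x) * LinearMap.lTensor A Δ (Δ 1)) := by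
    rw [assoc_symm_mul, ← coassoc_symm Δ ε hB 1, hB.weak_comul_unit_b, ← mul_assoc,
       ← assoc_symm_mul]
    congr 1
    rw [Algebra.TensorProduct.tmul_mul_tmul, one_mul, mul_D1 Δ ε hB]
  have lhs_eq : mSl ((𝔞).symm ((1:A) ⊗ₜ[K] Δ x) * (Δ 1 ⊗ₜ[K] (1:A)))
      = LinearMap.rTensor A (piR K A Δ ε) (Δ x) := by
    obtain ⟨T, hT⟩ := TensorProduct.exists_finset (Δ x)
    rw [hT, TensorProduct.tmul_sum, map_sum, Finset.sum_mul, map_sum, map_sum]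
    refine Finset.sum_congr rfl fun t _ => ?_
    rw [TensorProduct.assoc_symm_tmul, rTensor_tmul, piR_rep Δ ε, TensorProduct.sum_tmul,
      Rp_spec Δ 1, TensorProduct.sum_tmul, Finset.mul_sum, map_sum]
    refine Finset.sum_congr rfl fun q _ => ?_
    rw [Algebra.TensorProduct.tmul_mul_tmul, Algebra.TensorProduct.tmul_mul_tmul, one_mul,
      mul_one, hmSl, rTensor_tmul, sS_tmul]
  have rhs_eq : mSl ((𝔞).symm (((1:A) ⊗ₜ[K] Δ x) * LinearMap.lTensor A Δ (Δ 1)))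
      = ((1:A) ⊗ₜ[K] x) * Δ 1 := by
    have e1 : ((1:A) ⊗ₜ[K] Δ x) * LinearMap.lTensor A Δ (Δ 1)
        = ∑ q ∈ Rp Δ 1, q.1 ⊗ₜ[K] Δ (x * q.2) := by
      rw [lT_D1, Finset.mul_sum]
      refine Finset.sum_congr rfl fun q _ => ?_
      rw [Algebra.TensorProduct.tmul_mul_tmul, one_mul, ← hB.comul_mul]
    rw [e1, map_sum, map_sum]
    rw [Rp_spec Δ 1, Finset.mul_sum]
    refine Finset.sum_congr rfl fun q _ => ?_
    rw [Rp_spec Δ (x * q.2), TensorProduct.tmul_sum, map_sum, map_sum]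
    rw [Algebra.TensorProduct.tmul_mul_tmul, one_mul]
    have : ∀ r : A × A, mSl ((𝔞).symm (q.1 ⊗ₜ[K] (r.1 ⊗ₜ[K] r.2)))
        = ε r.1 • (q.1 ⊗ₜ[K] r.2) := by
      intro r
      rw [TensorProduct.assoc_symm_tmul, hmSl, rTensor_tmul, sS_tmul, TensorProduct.smul_tmul']
    rw [Finset.sum_congr rfl fun r _ => this r]
    rw [show q.1 ⊗ₜ[K] (x * q.2) = q.1 ⊗ₜ[K] sF ε A (Δ (x * q.2)) by rw [counitF Δ ε hB]]
    rw [Rp_spec Δ (x * q.2), map_sum, TensorProduct.tmul_sum]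
    exact (Finset.sum_congr rfl fun r _ => by rw [sF_tmul, TensorProduct.tmul_smul]).symm
  rw [← lhs_eq, key, rhs_eq]

lemma piL_map_eq (hA : WeakHopfAlgebra K A Δ ε S) :
    (μ) ∘ₗ LinearMap.lTensor A S ∘ₗ Δ = piL K A Δ ε :=
  LinearMap.ext fun x => hA.antipode_a x

lemma piR_map_eq (hA : WeakHopfAlgebra K A Δ ε S) :
    (μ) ∘ₗ LinearMap.rTensor A S ∘ₗ Δ = piR K A Δ ε :=
  LinearMap.ext fun x => hA.antipode_b x

/-- `Σ S(x₁) Π^L(x₂) = S x`. -/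
lemma SconvL (hA : WeakHopfAlgebra K A Δ ε S) (x : A) :
    μ (TensorProduct.map S (piL K A Δ ε) (Δ x)) = S x := by
  have e0 : TensorProduct.map S (piL K A Δ ε)
      = TensorProduct.map S ((μ) ∘ₗ LinearMap.lTensor A S) ∘ₗ LinearMap.lTensor A Δ := by
    rw [show LinearMap.lTensor A Δ = TensorProduct.map LinearMap.id Δ from rfl,
      ← TensorProduct.map_comp, LinearMap.comp_id, LinearMap.comp_assoc, piL_map_eq Δ ε S hA]
  rw [e0, LinearMap.comp_apply]
  exact hA.antipode_c x

lemma PQ3 : (μ) ∘ₗ TensorProduct.map ((μ) ∘ₗ LinearMap.rTensor A S) S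
    = ((μ) ∘ₗ TensorProduct.map S ((μ) ∘ₗ LinearMap.lTensor A S)) ∘ₗ
      ((𝔞 : (A ⊗[K] A) ⊗[K] A ≃ₗ[K] A ⊗[K] (A ⊗[K] A)) : (A ⊗[K] A) ⊗[K] A →ₗ[K] A ⊗[K] (A ⊗[K] A)) := by
  apply TensorProduct.ext_threefold
  intro a b c
  simp [mul_assoc]

/-- `Σ Π^R(x₁) S(x₂) = S x`. -/
lemma SconvR (hA : WeakHopfAlgebra K A Δ ε S) (x : A) :
    μ (TensorProduct.map (piR K A Δ ε) S (Δ x)) = S x := by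
  have e0 : TensorProduct.map (piR K A Δ ε) S
      = TensorProduct.map ((μ) ∘ₗ LinearMap.rTensor A S) S ∘ₗ LinearMap.rTensor A Δ := by
    rw [show LinearMap.rTensor A Δ = TensorProduct.map Δ LinearMap.id from rfl,
      ← TensorProduct.map_comp, LinearMap.comp_id, LinearMap.comp_assoc, piR_map_eq Δ ε S hA]
  rw [e0, LinearMap.comp_apply, ← LinearMap.comp_apply (μ), PQ3 S,
    LinearMap.comp_apply, LinearMap.comp_apply]
  have : ((𝔞 : (A ⊗[K] A) ⊗[K] A ≃ₗ[K] A ⊗[K] (A ⊗[K] A)) :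
      (A ⊗[K] A) ⊗[K] A →ₗ[K] A ⊗[K] (A ⊗[K] A)) (Δ.rTensor A (Δ x))
      = LinearMap.lTensor A Δ (Δ x) := hA.toWeakBialgebra.coassoc x
  rw [this]
  exact hA.antipode_c x

end WHA

end WHA18

namespace WHA18

open TensorProduct LinearMap Finset

set_option synthInstance.maxHeartbeats 1000000
set_option maxHeartbeats 1000000

variable {K : Type*} [Field K] {A : Type*} [Ring A] [Algebra K A]

section WHA2

variable (Δ : A →ₗ[K] A ⊗[K] A) (ε : A →ₗ[K] K) (S : A →ₗ[K] A)

local notation "𝔞" => TensorProduct.assoc K A A A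
local notation "μ" => LinearMap.mul' K A

/-- `Σ x₁ (Π^L w) S(x₂) = Π^L(x Π^L w)`. -/
lemma C1 (hA : WeakHopfAlgebra K A Δ ε S) (x w : A) :
    μ (LinearMap.lTensor A S (Δ x * (piL K A Δ ε w ⊗ₜ[K] (1:A))))
      = piL K A Δ ε (x * piL K A Δ ε w) := by
  have hB := hA.toWeakBialgebra
  have key : ∑ p ∈ Rp Δ 1, p.1 ⊗ₜ[K] (μ (LinearMap.lTensor A S (Δ x * (p.2 ⊗ₜ[K] (1:A)))))
      = ∑ p ∈ Rp Δ 1, p.1 ⊗ₜ[K] piL K A Δ ε (x * p.2) := by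
    have h := congrArg (LinearMap.lTensor A ((μ) ∘ₗ LinearMap.lTensor A S)) (Tlem1 Δ ε hB x)
    rw [map_sum, map_sum] at h
    calc ∑ p ∈ Rp Δ 1, p.1 ⊗ₜ[K] (μ (LinearMap.lTensor A S (Δ x * (p.2 ⊗ₜ[K] (1:A)))))
        = ∑ p ∈ Rp Δ 1, LinearMap.lTensor A ((μ) ∘ₗ LinearMap.lTensor A S)
            (p.1 ⊗ₜ[K] (Δ x * (p.2 ⊗ₜ[K] (1:A)))) :=
          Finset.sum_congr rfl fun p _ => by rw [lTensor_tmul]; rfl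
      _ = ∑ p ∈ Rp Δ 1, LinearMap.lTensor A ((μ) ∘ₗ LinearMap.lTensor A S)
            (p.1 ⊗ₜ[K] Δ (x * p.2)) := h
      _ = ∑ p ∈ Rp Δ 1, p.1 ⊗ₜ[K] piL K A Δ ε (x * p.2) := by
          refine Finset.sum_congr rfl fun p _ => ?_
          rw [lTensor_tmul, LinearMap.comp_apply, hA.antipode_a (x * p.2)]
  have h2 := congrArg (wF ε w A) key
  rw [map_sum, map_sum] at h2
  simp only [wF_tmul] at h2
  have eL : μ (LinearMap.lTensor A S (Δ x * (piL K A Δ ε w ⊗ₜ[K] (1:A))))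
      = ∑ p ∈ Rp Δ 1, ε (p.1 * w) • (μ (LinearMap.lTensor A S (Δ x * (p.2 ⊗ₜ[K] (1:A))))) := by
    rw [piL_rep Δ ε, TensorProduct.sum_tmul, Finset.mul_sum, map_sum, map_sum]
    exact Finset.sum_congr rfl fun p _ => by
      rw [← TensorProduct.smul_tmul', mul_smul_comm, map_smul, map_smul]
  have eR : piL K A Δ ε (x * piL K A Δ ε w)
      = ∑ p ∈ Rp Δ 1, ε (p.1 * w) • piL K A Δ ε (x * p.2) := by
    have hx : x * piL K A Δ ε w = ∑ p ∈ Rp Δ 1, ε (p.1 * w) • (x * p.2) := by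
      rw [piL_rep Δ ε w, Finset.mul_sum]
      exact Finset.sum_congr rfl fun p _ => (mul_smul_comm _ _ _)
    rw [hx, map_sum]
    exact Finset.sum_congr rfl fun p _ => by rw [map_smul]
  rw [eL, h2, ← eR]

/-- `Σ S(y₁) (Π^R w) y₂ = Π^R(Π^R w · y)`. -/
lemma C2 (hA : WeakHopfAlgebra K A Δ ε S) (y w : A) :
    μ (LinearMap.rTensor A S (((1:A) ⊗ₜ[K] piR K A Δ ε w) * Δ y))
      = piR K A Δ ε (piR K A Δ ε w * y) := by
  have hB := hA.toWeakBialgebra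
  have key : ∑ p ∈ Rp Δ 1, (μ (LinearMap.rTensor A S (((1:A) ⊗ₜ[K] p.1) * Δ y))) ⊗ₜ[K] p.2
      = ∑ p ∈ Rp Δ 1, piR K A Δ ε (p.1 * y) ⊗ₜ[K] p.2 := by
    have h := congrArg (LinearMap.rTensor A ((μ) ∘ₗ LinearMap.rTensor A S)) (Tlem2 Δ ε hB y)
    rw [map_sum, map_sum] at h
    calc ∑ p ∈ Rp Δ 1, (μ (LinearMap.rTensor A S (((1:A) ⊗ₜ[K] p.1) * Δ y))) ⊗ₜ[K] p.2
        = ∑ p ∈ Rp Δ 1, LinearMap.rTensor A ((μ) ∘ₗ LinearMap.rTensor A S)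
            ((((1:A) ⊗ₜ[K] p.1) * Δ y) ⊗ₜ[K] p.2) :=
          Finset.sum_congr rfl fun p _ => by rw [rTensor_tmul]; rfl
      _ = ∑ p ∈ Rp Δ 1, LinearMap.rTensor A ((μ) ∘ₗ LinearMap.rTensor A S)
            (Δ (p.1 * y) ⊗ₜ[K] p.2) := h
      _ = ∑ p ∈ Rp Δ 1, piR K A Δ ε (p.1 * y) ⊗ₜ[K] p.2 := by
          refine Finset.sum_congr rfl fun p _ => ?_
          rw [rTensor_tmul, LinearMap.comp_apply, hA.antipode_b (p.1 * y)]
  have h2 := congrArg (wS ε w A) key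
  rw [map_sum, map_sum] at h2
  simp only [wS_tmul] at h2
  have eL : μ (LinearMap.rTensor A S (((1:A) ⊗ₜ[K] piR K A Δ ε w) * Δ y))
      = ∑ p ∈ Rp Δ 1, ε (w * p.2) • (μ (LinearMap.rTensor A S (((1:A) ⊗ₜ[K] p.1) * Δ y))) := by
    rw [piR_rep Δ ε, TensorProduct.tmul_sum, Finset.sum_mul, map_sum, map_sum]
    exact Finset.sum_congr rfl fun p _ => by
      rw [TensorProduct.tmul_smul, smul_mul_assoc, map_smul, map_smul]
  have eR : piR K A Δ ε (piR K A Δ ε w * y)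
      = ∑ p ∈ Rp Δ 1, ε (w * p.2) • piR K A Δ ε (p.1 * y) := by
    have hx : piR K A Δ ε w * y = ∑ p ∈ Rp Δ 1, ε (w * p.2) • (p.1 * y) := by
      rw [piR_rep Δ ε w, Finset.sum_mul]
      exact Finset.sum_congr rfl fun p _ => (smul_mul_assoc _ _ _)
    rw [hx, map_sum]
    exact Finset.sum_congr rfl fun p _ => by rw [map_smul]
  rw [eL, h2, ← eR]

/-- `ε (a S(y)) = ε (a Π^R(y))`. -/
lemma eps_mul_S (hA : WeakHopfAlgebra K A Δ ε S) (a y : A) :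
    ε (a * S y) = ε (a * piR K A Δ ε y) := by
  have hB := hA.toWeakBialgebra
  obtain ⟨T, hT⟩ := TensorProduct.exists_finset (Δ y)
  have h1 : S y = ∑ t ∈ T, S t.1 * piL K A Δ ε t.2 := by
    rw [← SconvL Δ ε S hA y, hT, map_sum, map_sum]
    exact Finset.sum_congr rfl fun t _ => by rw [TensorProduct.map_tmul, LinearMap.mul'_apply]
  have h2 : piR K A Δ ε y = ∑ t ∈ T, S t.1 * t.2 := by
    rw [← hA.antipode_b y, hT, map_sum, map_sum]
    exact Finset.sum_congr rfl fun t _ => by rw [rTensor_tmul, LinearMap.mul'_apply]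
  rw [h1, h2, Finset.mul_sum, Finset.mul_sum, map_sum, map_sum]
  refine Finset.sum_congr rfl fun t _ => ?_
  rw [← mul_assoc, eps_mul_piL Δ ε hB, mul_assoc]

end WHA2

end WHA18

namespace WHA18

open TensorProduct LinearMap Finset

set_option synthInstance.maxHeartbeats 1000000
set_option maxHeartbeats 2000000

variable {K : Type*} [Field K] {A : Type*} [Ring A] [Algebra K A]

section Anti

variable (Δ : A →ₗ[K] A ⊗[K] A) (ε : A →ₗ[K] K) (S : A →ₗ[K] A)

local notation "𝔞" => TensorProduct.assoc K A A A
local notation "μ" => LinearMap.mul' K A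

lemma rT_rep (hB : WeakBialgebra K A Δ ε) (y : A) :
    Δ.rTensor A (Δ y) = ∑ j ∈ Rp Δ y, Δ j.1 ⊗ₜ[K] j.2 := by
  rw [Rp_spec Δ y, map_sum]
  exact Finset.sum_congr rfl fun j _ => by simp

lemma lT_rep_symm (hB : WeakBialgebra K A Δ ε) (y : A) :
    (𝔞).symm (LinearMap.lTensor A Δ (Δ y))
      = ∑ j ∈ Rp Δ y, ∑ r ∈ Rp Δ j.2, (j.1 ⊗ₜ[K] r.1) ⊗ₜ[K] r.2 := by
  rw [Rp_spec Δ y, map_sum, map_sum]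
  refine Finset.sum_congr rfl fun j _ => ?_
  rw [lTensor_tmul, Rp_spec Δ j.2, TensorProduct.tmul_sum, map_sum]
  exact Finset.sum_congr rfl fun r _ => by simp

lemma piL_rep' (hA : WeakHopfAlgebra K A Δ ε S) (c : A) :
    piL K A Δ ε c = ∑ r ∈ Rp Δ c, r.1 * S r.2 := by
  rw [← hA.antipode_a c, Rp_spec Δ c, map_sum, map_sum]
  exact Finset.sum_congr rfl fun r _ => by simp

lemma piR_rep' (hA : WeakHopfAlgebra K A Δ ε S) (c : A) :
    piR K A Δ ε c = ∑ r ∈ Rp Δ c, S r.1 * r.2 := by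
  rw [← hA.antipode_b c, Rp_spec Δ c, map_sum, map_sum]
  exact Finset.sum_congr rfl fun r _ => by simp

/-- `y`-coassociativity exchange for direction 2. -/
lemma collapse2_y (hA : WeakHopfAlgebra K A Δ ε S) (y w t : A) :
    ∑ j ∈ Rp Δ y, S j.1 * (piR K A Δ ε w * (piL K A Δ ε j.2 * t))
      = ∑ j ∈ Rp Δ y, piR K A Δ ε (piR K A Δ ε w * j.1) * (S j.2 * t) := by
  have hB := hA.toWeakBialgebra
  set z := piR K A Δ ε w with hz
  set Ψ : (A ⊗[K] A) ⊗[K] A →ₗ[K] A :=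
    (μ) ∘ₗ TensorProduct.map ((μ) ∘ₗ TensorProduct.map S (LinearMap.mulLeft K z))
      (LinearMap.mulRight K t ∘ₗ S) with hΨ
  have Ψt : ∀ a b c : A, Ψ ((a ⊗ₜ[K] b) ⊗ₜ[K] c) = (S a * (z * b)) * (S c * t) := by
    intro a b c; simp [hΨ]
  have e1 : ∑ j ∈ Rp Δ y, S j.1 * (z * (piL K A Δ ε j.2 * t))
      = Ψ ((𝔞).symm (LinearMap.lTensor A Δ (Δ y))) := by
    rw [lT_rep_symm Δ ε hB, map_sum]
    refine Finset.sum_congr rfl fun j _ => ?_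
    rw [map_sum, piL_rep' Δ ε S hA j.2, Finset.sum_mul, Finset.mul_sum, Finset.mul_sum]
    refine Finset.sum_congr rfl fun r _ => ?_
    rw [Ψt]
    simp only [mul_assoc]
  have e2 : Ψ (Δ.rTensor A (Δ y)) = ∑ j ∈ Rp Δ y, piR K A Δ ε (z * j.1) * (S j.2 * t) := by
    rw [rT_rep Δ ε hB, map_sum]
    refine Finset.sum_congr rfl fun j _ => ?_
    have h1 : Ψ (Δ j.1 ⊗ₜ[K] j.2)
        = (μ) (TensorProduct.map S (LinearMap.mulLeft K z) (Δ j.1)) * (S j.2 * t) := by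
      simp [hΨ]
    have h2 : TensorProduct.map S (LinearMap.mulLeft K z) (Δ j.1)
        = LinearMap.rTensor A S (((1:A) ⊗ₜ[K] z) * Δ j.1) := by
      rw [Rp_spec Δ j.1, map_sum, Finset.mul_sum, map_sum]
      exact Finset.sum_congr rfl fun q _ => by simp
    rw [h1, h2, hz, C2 Δ ε S hA j.1 w]
  rw [e1, ← coassoc_symm Δ ε hB y, e2]

/-- first `y`-coassociativity exchange for direction 1. -/
lemma collapse1_y (hA : WeakHopfAlgebra K A Δ ε S) (y : A) (X : A ⊗[K] A) (t : A) :
    ∑ j ∈ Rp Δ y, (μ) (LinearMap.rTensor A S (X * Δ j.1)) * (S j.2 * t)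
      = ∑ j ∈ Rp Δ y, ∑ r ∈ Rp Δ j.2,
          (μ) (LinearMap.rTensor A S (X * (j.1 ⊗ₜ[K] r.1))) * (S r.2 * t) := by
  have hB := hA.toWeakBialgebra
  set Γ : (A ⊗[K] A) ⊗[K] A →ₗ[K] A :=
    (μ) ∘ₗ TensorProduct.map ((μ) ∘ₗ LinearMap.rTensor A S ∘ₗ LinearMap.mulLeft K X)
      (LinearMap.mulRight K t ∘ₗ S) with hΓ
  have e1 : ∑ j ∈ Rp Δ y, (μ) (LinearMap.rTensor A S (X * Δ j.1)) * (S j.2 * t)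
      = Γ (Δ.rTensor A (Δ y)) := by
    rw [rT_rep Δ ε hB, map_sum]
    exact Finset.sum_congr rfl fun j _ => by simp [hΓ]
  have e2 : Γ ((𝔞).symm (LinearMap.lTensor A Δ (Δ y)))
      = ∑ j ∈ Rp Δ y, ∑ r ∈ Rp Δ j.2,
          (μ) (LinearMap.rTensor A S (X * (j.1 ⊗ₜ[K] r.1))) * (S r.2 * t) := by
    rw [lT_rep_symm Δ ε hB, map_sum]
    refine Finset.sum_congr rfl fun j _ => ?_
    rw [map_sum]
    exact Finset.sum_congr rfl fun r _ => by simp [hΓ]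
  rw [e1, coassoc_symm Δ ε hB y, e2]

/-- `x`-coassociativity exchange for direction 1. -/
lemma collapse1_x (hA : WeakHopfAlgebra K A Δ ε S) (x : A) (c d e : A) :
    ∑ i ∈ Rp Δ x, (μ) (LinearMap.rTensor A S (Δ i.1 * (c ⊗ₜ[K] d))) * (e * S i.2)
      = ∑ i ∈ Rp Δ x, ∑ v ∈ Rp Δ i.2, (S (i.1 * c) * (v.1 * d)) * (e * S v.2) := by
  have hB := hA.toWeakBialgebra
  set Ω : (A ⊗[K] A) ⊗[K] A →ₗ[K] A :=
    (μ) ∘ₗ TensorProduct.map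
      ((μ) ∘ₗ TensorProduct.map (S ∘ₗ LinearMap.mulRight K c) (LinearMap.mulRight K d))
      (LinearMap.mulLeft K e ∘ₗ S) with hΩ
  have Ωt : ∀ a b f : A, Ω ((a ⊗ₜ[K] b) ⊗ₜ[K] f) = (S (a * c) * (b * d)) * (e * S f) := by
    intro a b f; simp [hΩ]
  have e1 : ∑ i ∈ Rp Δ x, (μ) (LinearMap.rTensor A S (Δ i.1 * (c ⊗ₜ[K] d))) * (e * S i.2)
      = Ω (Δ.rTensor A (Δ x)) := by
    rw [rT_rep Δ ε hB, map_sum]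
    refine Finset.sum_congr rfl fun i _ => ?_
    have h1 : Ω (Δ i.1 ⊗ₜ[K] i.2)
        = (μ) (TensorProduct.map (S ∘ₗ LinearMap.mulRight K c) (LinearMap.mulRight K d) (Δ i.1))
            * (e * S i.2) := by
      simp [hΩ]
    have h2 : TensorProduct.map (S ∘ₗ LinearMap.mulRight K c) (LinearMap.mulRight K d) (Δ i.1)
        = LinearMap.rTensor A S (Δ i.1 * (c ⊗ₜ[K] d)) := by
      rw [Rp_spec Δ i.1, map_sum, Finset.sum_mul, map_sum]
      exact Finset.sum_congr rfl fun q _ => by simp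
    rw [h1, h2]
  have e2 : Ω ((𝔞).symm (LinearMap.lTensor A Δ (Δ x)))
      = ∑ i ∈ Rp Δ x, ∑ v ∈ Rp Δ i.2, (S (i.1 * c) * (v.1 * d)) * (e * S v.2) := by
    rw [lT_rep_symm Δ ε hB, map_sum]
    refine Finset.sum_congr rfl fun i _ => ?_
    rw [map_sum]
    exact Finset.sum_congr rfl fun v _ => (Ωt _ _ _)
  rw [e1, coassoc_symm Δ ε hB x, e2]

end Anti

end WHA18

namespace WHA18

open TensorProduct LinearMap Finset

set_option synthInstance.maxHeartbeats 1000000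
set_option maxHeartbeats 4000000

variable {K : Type*} [Field K] {A : Type*} [Ring A] [Algebra K A]

section Anti2

variable (Δ : A →ₗ[K] A ⊗[K] A) (ε : A →ₗ[K] K) (S : A →ₗ[K] A)

local notation "𝔞" => TensorProduct.assoc K A A A
local notation "μ" => LinearMap.mul' K A

/-- The antipode of a weak Hopf algebra is antimultiplicative. -/
theorem S_mul (hA : WeakHopfAlgebra K A Δ ε S) (x y : A) : S (x * y) = S y * S x := by
  have hB := hA.toWeakBialgebra
  set Mid := ∑ i ∈ Rp Δ x, ∑ j ∈ Rp Δ y, piR K A Δ ε (i.1 * j.1) * (S j.2 * S i.2) with hMid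
  have dir2 : S y * S x = Mid := by
    have hSy : S y = ∑ j ∈ Rp Δ y, S j.1 * piL K A Δ ε j.2 := by
      rw [← SconvL Δ ε S hA y, Rp_spec Δ y, map_sum, map_sum]
      exact Finset.sum_congr rfl fun j _ => by simp
    have hSx : S x = ∑ i ∈ Rp Δ x, piR K A Δ ε i.1 * S i.2 := by
      rw [← SconvR Δ ε S hA x, Rp_spec Δ x, map_sum, map_sum]
      exact Finset.sum_congr rfl fun i _ => by simp
    rw [hSy, hSx, Finset.sum_mul_sum, Finset.sum_comm, hMid]
    refine Finset.sum_congr rfl fun i _ => ?_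
    have step1 : ∀ j : A × A, (S j.1 * piL K A Δ ε j.2) * (piR K A Δ ε i.1 * S i.2)
        = S j.1 * (piR K A Δ ε i.1 * (piL K A Δ ε j.2 * S i.2)) := by
      intro j
      rw [mul_assoc, ← mul_assoc (piL K A Δ ε j.2), ← piR_comm_piL Δ ε hB i.1 j.2, mul_assoc]
    rw [Finset.sum_congr rfl fun j _ => step1 j, collapse2_y Δ ε S hA y i.1 (S i.2)]
    exact Finset.sum_congr rfl fun j _ => by rw [piR_piR_mul Δ ε hB]
  have dir1 : Mid = S (x * y) := by
    rw [hMid]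
    calc ∑ i ∈ Rp Δ x, ∑ j ∈ Rp Δ y, piR K A Δ ε (i.1 * j.1) * (S j.2 * S i.2)
        = ∑ i ∈ Rp Δ x, ∑ j ∈ Rp Δ y,
            (μ) (LinearMap.rTensor A S (Δ i.1 * Δ j.1)) * (S j.2 * S i.2) :=
          Finset.sum_congr rfl fun i _ => Finset.sum_congr rfl fun j _ => by
            rw [← hA.antipode_b (i.1 * j.1), hB.comul_mul]
      _ = ∑ i ∈ Rp Δ x, ∑ j ∈ Rp Δ y, ∑ r ∈ Rp Δ j.2,
            (μ) (LinearMap.rTensor A S (Δ i.1 * (j.1 ⊗ₜ[K] r.1))) * (S r.2 * S i.2) :=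
          Finset.sum_congr rfl fun i _ => collapse1_y Δ ε S hA y (Δ i.1) (S i.2)
      _ = ∑ j ∈ Rp Δ y, ∑ i ∈ Rp Δ x, ∑ r ∈ Rp Δ j.2,
            (μ) (LinearMap.rTensor A S (Δ i.1 * (j.1 ⊗ₜ[K] r.1))) * (S r.2 * S i.2) :=
          Finset.sum_comm
      _ = ∑ j ∈ Rp Δ y, ∑ r ∈ Rp Δ j.2, ∑ i ∈ Rp Δ x,
            (μ) (LinearMap.rTensor A S (Δ i.1 * (j.1 ⊗ₜ[K] r.1))) * (S r.2 * S i.2) :=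
          Finset.sum_congr rfl fun j _ => Finset.sum_comm
      _ = ∑ j ∈ Rp Δ y, ∑ r ∈ Rp Δ j.2, ∑ i ∈ Rp Δ x, ∑ v ∈ Rp Δ i.2,
            (S (i.1 * j.1) * (v.1 * r.1)) * (S r.2 * S v.2) :=
          Finset.sum_congr rfl fun j _ => Finset.sum_congr rfl fun r _ =>
            collapse1_x Δ ε S hA x j.1 r.1 (S r.2)
      _ = ∑ j ∈ Rp Δ y, ∑ i ∈ Rp Δ x, ∑ r ∈ Rp Δ j.2, ∑ v ∈ Rp Δ i.2,
            (S (i.1 * j.1) * (v.1 * r.1)) * (S r.2 * S v.2) :=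
          Finset.sum_congr rfl fun j _ => Finset.sum_comm
      _ = ∑ i ∈ Rp Δ x, ∑ j ∈ Rp Δ y, ∑ r ∈ Rp Δ j.2, ∑ v ∈ Rp Δ i.2,
            (S (i.1 * j.1) * (v.1 * r.1)) * (S r.2 * S v.2) :=
          Finset.sum_comm
      _ = ∑ i ∈ Rp Δ x, ∑ j ∈ Rp Δ y, ∑ v ∈ Rp Δ i.2, ∑ r ∈ Rp Δ j.2,
            (S (i.1 * j.1) * (v.1 * r.1)) * (S r.2 * S v.2) :=
          Finset.sum_congr rfl fun i _ => Finset.sum_congr rfl fun j _ =>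
            Finset.sum_comm
      _ = ∑ i ∈ Rp Δ x, ∑ j ∈ Rp Δ y, S (i.1 * j.1) * piL K A Δ ε (i.2 * j.2) := by
          refine Finset.sum_congr rfl fun i _ => Finset.sum_congr rfl fun j _ => ?_
          have hpack : ∀ v : A × A,
              ∑ r ∈ Rp Δ j.2, (S (i.1 * j.1) * (v.1 * r.1)) * (S r.2 * S v.2)
              = S (i.1 * j.1) * (v.1 * (piL K A Δ ε j.2 * S v.2)) := by
            intro v
            rw [piL_rep' Δ ε S hA j.2, Finset.sum_mul, Finset.mul_sum, Finset.mul_sum]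
            exact Finset.sum_congr rfl fun r _ => by simp only [mul_assoc]
          rw [Finset.sum_congr rfl fun v _ => hpack v, ← Finset.mul_sum]
          congr 1
          have e : ∑ v ∈ Rp Δ i.2, v.1 * (piL K A Δ ε j.2 * S v.2)
              = (μ) (LinearMap.lTensor A S (Δ i.2 * (piL K A Δ ε j.2 ⊗ₜ[K] (1:A)))) := by
            rw [Rp_spec Δ i.2, Finset.sum_mul, map_sum, map_sum]
            refine Finset.sum_congr rfl fun v _ => ?_
            simp [mul_assoc]
          rw [e, C1 Δ ε S hA i.2 j.2, piL_mul_piL Δ ε hB]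
      _ = S (x * y) := by
          rw [← SconvL Δ ε S hA (x * y), hB.comul_mul, Rp_spec Δ x, Rp_spec Δ y,
            Finset.sum_mul_sum, map_sum, map_sum]
          refine Finset.sum_congr rfl fun i _ => ?_
          rw [map_sum, map_sum]
          refine Finset.sum_congr rfl fun j _ => ?_
          rw [Algebra.TensorProduct.tmul_mul_tmul, TensorProduct.map_tmul,
            LinearMap.mul'_apply]
  rw [dir1.symm, dir2]

end Anti2

end WHA18

namespace WHA18

open TensorProduct LinearMap Finset

set_option synthInstance.maxHeartbeats 1000000
set_option maxHeartbeats 2000000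

variable {K : Type*} [Field K] {A : Type*} [Ring A] [Algebra K A]

section Integral

variable (Δ : A →ₗ[K] A ⊗[K] A) (ε : A →ₗ[K] K) (S : A →ₗ[K] A)

local notation "𝔞" => TensorProduct.assoc K A A A
local notation "μ" => LinearMap.mul' K A

lemma Sx_rep (hA : WeakHopfAlgebra K A Δ ε S) (x : A) :
    S x = ∑ i ∈ Rp Δ x, S i.1 * piL K A Δ ε i.2 := by
  rw [← SconvL Δ ε S hA x, Rp_spec Δ x, map_sum, map_sum]
  exact Finset.sum_congr rfl fun i _ => by simp

/-- `Σ (S x₁ ⊗ 1) Δ x₂ = Σ Π^R x₁ ⊗ x₂`. -/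
lemma SD_collapse (hA : WeakHopfAlgebra K A Δ ε S) (x : A) :
    ∑ i ∈ Rp Δ x, (S i.1 ⊗ₜ[K] (1:A)) * Δ i.2
      = LinearMap.rTensor A (piR K A Δ ε) (Δ x) := by
  have hB := hA.toWeakBialgebra
  set ΞS : (A ⊗[K] A) ⊗[K] A →ₗ[K] A ⊗[K] A :=
    LinearMap.rTensor A ((μ) ∘ₗ LinearMap.rTensor A S) with hΞ
  have e1 : ∑ i ∈ Rp Δ x, (S i.1 ⊗ₜ[K] (1:A)) * Δ i.2
      = ΞS ((𝔞).symm (LinearMap.lTensor A Δ (Δ x))) := by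
    rw [lT_rep_symm Δ ε hB, map_sum]
    refine Finset.sum_congr rfl fun i _ => ?_
    rw [map_sum, Rp_spec Δ i.2, Finset.mul_sum]
    refine Finset.sum_congr rfl fun v _ => ?_
    rw [hΞ, rTensor_tmul, Algebra.TensorProduct.tmul_mul_tmul, one_mul]
    simp
  have e2 : ΞS (Δ.rTensor A (Δ x)) = LinearMap.rTensor A (piR K A Δ ε) (Δ x) := by
    rw [rT_rep Δ ε hB, Rp_spec Δ x, map_sum, map_sum]
    refine Finset.sum_congr rfl fun i _ => ?_
    rw [hΞ, rTensor_tmul, rTensor_tmul, LinearMap.comp_apply, hA.antipode_b]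
  rw [e1, ← coassoc_symm Δ ε hB x, e2]

/-- For a left integral `l`: `(1 ⊗ x) Δ l = (S x ⊗ 1) Δ l`. -/
theorem I1 (hA : WeakHopfAlgebra K A Δ ε S) (l : A)
    (hl : ∀ x : A, x * l = piL K A Δ ε x * l) (x : A) :
    ((1:A) ⊗ₜ[K] x) * Δ l = (S x ⊗ₜ[K] (1:A)) * Δ l := by
  have hB := hA.toWeakBialgebra
  have evalA : ∑ i ∈ Rp Δ x, (S i.1 ⊗ₜ[K] (1:A)) * Δ (i.2 * l)
      = (S x ⊗ₜ[K] (1:A)) * Δ l := by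
    have e1 : ∀ i : A × A, (S i.1 ⊗ₜ[K] (1:A)) * Δ (i.2 * l)
        = ((S i.1 * piL K A Δ ε i.2) ⊗ₜ[K] (1:A)) * Δ l := by
      intro i
      rw [hl i.2, hB.comul_mul, comul_piL_r Δ ε hB, mul_assoc, D1_mul Δ ε hB, ← mul_assoc,
        Algebra.TensorProduct.tmul_mul_tmul, mul_one]
    rw [Finset.sum_congr rfl fun i _ => e1 i, ← Finset.sum_mul, ← TensorProduct.sum_tmul,
      ← Sx_rep Δ ε S hA x]
  have evalB : ∑ i ∈ Rp Δ x, (S i.1 ⊗ₜ[K] (1:A)) * Δ (i.2 * l)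
      = ((1:A) ⊗ₜ[K] x) * Δ l := by
    have e1 : ∀ i : A × A, (S i.1 ⊗ₜ[K] (1:A)) * Δ (i.2 * l)
        = ((S i.1 ⊗ₜ[K] (1:A)) * Δ i.2) * Δ l := by
      intro i; rw [hB.comul_mul, mul_assoc]
    rw [Finset.sum_congr rfl fun i _ => e1 i, ← Finset.sum_mul, SD_collapse Δ ε S hA x,
      W9 Δ ε hB x, mul_assoc, D1_mul Δ ε hB]
  rw [← evalB, evalA]

end Integral

end WHA18

namespace WHA18

open TensorProduct LinearMap Finset

set_option synthInstance.maxHeartbeats 1000000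
set_option maxHeartbeats 4000000

variable {K : Type*} [Field K] {A : Type*} [Ring A] [Algebra K A]

section Master

variable (Δ : A →ₗ[K] A ⊗[K] A) (ε : A →ₗ[K] K) (S : A →ₗ[K] A)

local notation "μ" => LinearMap.mul' K A

/-- The master lemma: a left integral with `Π^R l = 1` is a two-sided Haar integral,
is `S`-invariant and nondegenerate. -/
theorem master [FiniteDimensional K A] (hA : WeakHopfAlgebra K A Δ ε S) (l : A)
    (hl : ∀ x : A, x * l = piL K A Δ ε x * l) (hn : piR K A Δ ε l = 1) :
    (∀ x : A, l * x = l * piR K A Δ ε x) ∧ piL K A Δ ε l = 1 ∧ S l = l ∧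
      Function.Bijective
        (fun φ : A →ₗ[K] K => (TensorProduct.rid K A) (LinearMap.lTensor A φ (Δ l))) := by
  classical
  have hB := hA.toWeakBialgebra
  set n := Module.finrank K A with hndef
  set b : Module.Basis (Fin n) K A := Module.finBasis K A with hb
  set wv : Fin n → A := fun i => (TensorProduct.lid K A) ((b.coord i).rTensor A (Δ l)) with hwv
  have brep : ∀ t : A ⊗[K] A,
      t = ∑ i, b i ⊗ₜ[K] (TensorProduct.lid K A) ((b.coord i).rTensor A t) := by
    intro t
    induction t using TensorProduct.induction_on with
    | zero => simp
    | tmul u v =>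
      refine Eq.symm ?_
      have e : ∀ i : Fin n,
          b i ⊗ₜ[K] ((TensorProduct.lid K A) ((b.coord i).rTensor A (u ⊗ₜ[K] v)))
          = (b.repr u) i • (b i ⊗ₜ[K] v) := by
        intro i
        rw [rTensor_tmul, TensorProduct.lid_tmul, Module.Basis.coord_apply, TensorProduct.tmul_smul]
      rw [Finset.sum_congr rfl fun i _ => e i]
      calc ∑ i, (b.repr u) i • (b i ⊗ₜ[K] v)
          = ∑ i, ((b.repr u) i • b i) ⊗ₜ[K] v :=
            Finset.sum_congr rfl fun i _ => TensorProduct.smul_tmul' _ _ _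
        _ = (∑ i, (b.repr u) i • b i) ⊗ₜ[K] v := (TensorProduct.sum_tmul _ _ _).symm
        _ = u ⊗ₜ[K] v := by rw [Module.Basis.sum_repr]
    | add t1 t2 h1 h2 =>
      simp only [map_add, TensorProduct.tmul_add, Finset.sum_add_distrib]
      rw [← h1, ← h2]
  have hrep : Δ l = ∑ i, b i ⊗ₜ[K] wv i := brep (Δ l)
  have hslice : ∀ (v : Fin n → A) (j : Fin n),
      (TensorProduct.lid K A) ((b.coord j).rTensor A (∑ i, b i ⊗ₜ[K] v i)) = v j := by
    intro v j
    rw [map_sum, map_sum]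
    have e : ∀ i : Fin n, (TensorProduct.lid K A) ((b.coord j).rTensor A (b i ⊗ₜ[K] v i))
        = if i = j then v j else 0 := by
      intro i
      rw [rTensor_tmul, TensorProduct.lid_tmul, Module.Basis.coord_apply, Module.Basis.repr_self,
        Finsupp.single_apply]
      by_cases h : i = j
      · subst h; simp
      · simp [h]
    rw [Finset.sum_congr rfl fun i _ => e i]
    simp
  have hone : (1:A) = ∑ i, S (b i) * wv i := by
    rw [← hn, ← hA.antipode_b l, hrep, map_sum, map_sum]
    exact Finset.sum_congr rfl fun i _ => by simp
  set W : Submodule K A := Submodule.span K (Set.range wv) with hW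
  have eLgen : ∀ a : A, ((1:A) ⊗ₜ[K] a) * Δ l = ∑ i, b i ⊗ₜ[K] (a * wv i) := by
    intro a
    rw [hrep, Finset.mul_sum]
    exact Finset.sum_congr rfl fun i _ => by
      rw [Algebra.TensorProduct.tmul_mul_tmul, one_mul]
  have hmulgen : ∀ (a : A) (j : Fin n), a * wv j ∈ W := by
    intro a j
    have hI := I1 Δ ε S hA l hl a
    have eR : (S a ⊗ₜ[K] (1:A)) * Δ l
        = ∑ i, b i ⊗ₜ[K] (∑ k, (b.repr (S a * b k)) i • wv k) := by
      rw [hrep, Finset.mul_sum]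
      calc ∑ k, (S a ⊗ₜ[K] (1:A)) * (b k ⊗ₜ[K] wv k)
          = ∑ k, ∑ i, (b.repr (S a * b k)) i • (b i ⊗ₜ[K] wv k) := by
            refine Finset.sum_congr rfl fun k _ => ?_
            rw [Algebra.TensorProduct.tmul_mul_tmul, one_mul]
            conv_lhs => rw [← Module.Basis.sum_repr b (S a * b k)]
            rw [TensorProduct.sum_tmul]
            exact Finset.sum_congr rfl fun i _ => (TensorProduct.smul_tmul' _ _ _).symm
        _ = ∑ i, ∑ k, (b.repr (S a * b k)) i • (b i ⊗ₜ[K] wv k) := Finset.sum_comm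
        _ = ∑ i, b i ⊗ₜ[K] (∑ k, (b.repr (S a * b k)) i • wv k) := by
            refine Finset.sum_congr rfl fun i _ => ?_
            rw [TensorProduct.tmul_sum]
            exact Finset.sum_congr rfl fun k _ => (TensorProduct.tmul_smul _ _ _).symm
    rw [eLgen a, eR] at hI
    have h2 := congrArg (fun t => (TensorProduct.lid K A) ((b.coord j).rTensor A t)) hI
    rw [hslice (fun i => a * wv i) j, hslice _ j] at h2
    rw [h2]
    exact Submodule.sum_mem _ fun k _ =>
      Submodule.smul_mem _ _ (Submodule.subset_span ⟨k, rfl⟩)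
  have hmulW : ∀ (a u : A), u ∈ W → a * u ∈ W := by
    intro a
    have hle : W ≤ Submodule.comap (LinearMap.mulLeft K a) W := by
      rw [hW, Submodule.span_le]
      rintro _ ⟨j, rfl⟩
      exact hmulgen a j
    intro u hu
    exact hle hu
  have honeW : (1:A) ∈ W := by
    rw [hone]
    exact Submodule.sum_mem _ fun i _ =>
      hmulW (S (b i)) _ (Submodule.subset_span ⟨i, rfl⟩)
  have hWtop : ∀ u : A, u ∈ W := by
    intro u
    have := hmulW u 1 honeW
    rwa [mul_one] at this
  have hSinj : Function.Injective S := by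
    rw [← LinearMap.ker_eq_bot]
    apply (Submodule.eq_bot_iff _).mpr
    intro a ha
    have hSa : S a = 0 := ha
    have hI := I1 Δ ε S hA l hl a
    rw [hSa, TensorProduct.zero_tmul, zero_mul, eLgen a] at hI
    have hz : ∀ j, a * wv j = 0 := by
      intro j
      have h2 := congrArg (fun t => (TensorProduct.lid K A) ((b.coord j).rTensor A t)) hI
      rw [hslice (fun i => a * wv i) j] at h2
      simpa using h2
    have hza : W ≤ LinearMap.ker (LinearMap.mulLeft K a) := by
      rw [hW, Submodule.span_le]
      rintro _ ⟨j, rfl⟩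
      exact hz j
    have h3 := hza honeW
    rw [LinearMap.mem_ker, LinearMap.mulLeft_apply, mul_one] at h3
    exact h3
  have hSsurj : Function.Surjective S := (LinearMap.injective_iff_surjective).mp hSinj
  have hI7 : ∀ x : A, x * l = ∑ i, ε (S x * b i) • wv i := by
    intro x
    have hI := I1 Δ ε S hA l hl x
    have h2 := congrArg (sF ε A) hI
    have eL2 : sF ε A (((1:A) ⊗ₜ[K] x) * Δ l) = x * l := by
      rw [eLgen x, map_sum]
      have e : ∀ i : Fin n, sF ε A (b i ⊗ₜ[K] (x * wv i)) = x * (ε (b i) • wv i) := by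
        intro i; rw [sF_tmul, mul_smul_comm]
      rw [Finset.sum_congr rfl fun i _ => e i, ← Finset.mul_sum]
      congr 1
      have hc := counitF Δ ε hB l
      rw [hrep, map_sum] at hc
      simpa using hc
    have eR2 : sF ε A ((S x ⊗ₜ[K] (1:A)) * Δ l) = ∑ i, ε (S x * b i) • wv i := by
      rw [hrep, Finset.mul_sum, map_sum]
      refine Finset.sum_congr rfl fun i _ => ?_
      rw [Algebra.TensorProduct.tmul_mul_tmul, one_mul, sF_tmul]
    rw [eL2, eR2] at h2
    exact h2
  have hLam : ∀ u : A, S l * u = ∑ i, ε (u * b i) • S (wv i) := by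
    intro u
    obtain ⟨v, rfl⟩ := hSsurj u
    rw [← S_mul Δ ε S hA v l, hI7 v, map_sum]
    exact Finset.sum_congr rfl fun i _ => by rw [map_smul]
  have hrint : ∀ u : A, S l * piR K A Δ ε u = S l * u := by
    intro u
    rw [hLam, hLam u]
    exact Finset.sum_congr rfl fun i _ => by rw [eps_piR_mul Δ ε hB]
  have hpiLSl : piL K A Δ ε (S l) = 1 := by
    rw [piL_rep Δ ε]
    have e : ∀ p : A × A, ε (p.1 * S l) • p.2 = ε p.1 • p.2 := by
      intro p
      rw [eps_mul_S Δ ε S hA, hn, mul_one]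
    rw [Finset.sum_congr rfl fun p _ => e p]
    have hc := counitF Δ ε hB 1
    rw [Rp_spec Δ 1, map_sum] at hc
    simpa using hc
  have hlSl : l = S l := by
    have h1 : S l * l = l := by
      rw [hl (S l), hpiLSl, one_mul]
    have h2 : S l = S l * l := by
      have h3 := hrint l
      rw [hn, mul_one] at h3
      exact h3
    exact h1.symm.trans h2.symm
  have hri : ∀ x : A, l * x = l * piR K A Δ ε x := by
    intro x
    calc l * x = S l * x := by rw [← hlSl]
      _ = S l * piR K A Δ ε x := (hrint x).symm
      _ = l * piR K A Δ ε x := by rw [← hlSl]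
  have hpiLl : piL K A Δ ε l = 1 := by
    rw [hlSl]; exact hpiLSl
  refine ⟨hri, hpiLl, hlSl.symm, ?_⟩
  -- nondegeneracy
  have hfval : ∀ φ : A →ₗ[K] K,
      (TensorProduct.rid K A) (LinearMap.lTensor A φ (Δ l)) = ∑ i, φ (wv i) • b i := by
    intro φ
    rw [hrep, map_sum, map_sum]
    exact Finset.sum_congr rfl fun i _ => by simp
  have hinj : Function.Injective
      (fun φ : A →ₗ[K] K => (TensorProduct.rid K A) (LinearMap.lTensor A φ (Δ l))) := by
    intro φ ψ hfeq
    simp only [hfval] at hfeq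
    have hsum : ∑ i, (φ (wv i) - ψ (wv i)) • b i = 0 := by
      simp only [sub_smul]
      rw [Finset.sum_sub_distrib, hfeq, sub_self]
    have hco : ∀ i, φ (wv i) - ψ (wv i) = 0 :=
      Fintype.linearIndependent_iff.mp b.linearIndependent _ hsum
    have hWeq : W ≤ LinearMap.ker (φ - ψ) := by
      rw [hW, Submodule.span_le]
      rintro _ ⟨j, rfl⟩
      rw [SetLike.mem_coe, LinearMap.mem_ker, LinearMap.sub_apply, sub_eq_zero]
      exact sub_eq_zero.mp (hco j)
    refine LinearMap.ext fun u => ?_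
    have h4 := hWeq (hWtop u)
    rw [LinearMap.mem_ker, LinearMap.sub_apply, sub_eq_zero] at h4
    exact h4
  refine ⟨hinj, ?_⟩
  -- surjectivity via dimension count
  set Θ : (A →ₗ[K] K) →ₗ[K] A :=
    { toFun := fun φ => ∑ i, φ (wv i) • b i
      map_add' := by
        intro φ ψ
        simp only [LinearMap.add_apply, add_smul, Finset.sum_add_distrib]
      map_smul' := by
        intro c φ
        simp only [LinearMap.smul_apply, smul_eq_mul, RingHom.id_apply, Finset.smul_sum,
          smul_smul] } with hΘ
  have hfeqΘ : (fun φ : A →ₗ[K] K =>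
      (TensorProduct.rid K A) (LinearMap.lTensor A φ (Δ l))) = ⇑Θ := by
    funext φ
    rw [hfval]
    rfl
  have hinjΘ : Function.Injective Θ := by
    rw [← hfeqΘ]
    exact hinj
  have hrange : LinearMap.range Θ = ⊤ := by
    apply Submodule.eq_top_of_finrank_eq
    rw [LinearMap.finrank_range_of_inj hinjΘ]
    exact Subspace.dual_finrank_eq
  have hsurjΘ : Function.Surjective Θ := LinearMap.range_eq_top.mp hrange
  rw [hfeqΘ]
  exact hsurjΘ

end Master

end WHA18

/-- (a) A left integral `l` in a weak Hopf algebra `A` is a Haar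
integral if and only if `Π^R(l) = 1`.  (b) A Haar integral, if it exists, is unique,
idempotent, `S`-invariant and nondegenerate. -/
theorem weakHopfAlgebra_haar_integral_properties
    (K : Type*) [Field K] (A : Type*) [Ring A] [Algebra K A] [FiniteDimensional K A]
    (Δ : A →ₗ[K] A ⊗[K] A) (ε : A →ₗ[K] K) (S : A →ₗ[K] A)
    (hA : WeakHopfAlgebra K A Δ ε S) :
    (∀ l : A, (∀ x : A, x * l = piL K A Δ ε x * l) →
      (((∀ x : A, l * x = l * piR K A Δ ε x) ∧ piL K A Δ ε l = 1 ∧ piR K A Δ ε l = 1) ↔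
        piR K A Δ ε l = 1)) ∧
    (∀ h h' : A,
      ((∀ x : A, x * h = piL K A Δ ε x * h) ∧ (∀ x : A, h * x = h * piR K A Δ ε x) ∧
        piL K A Δ ε h = 1 ∧ piR K A Δ ε h = 1) →
      ((∀ x : A, x * h' = piL K A Δ ε x * h') ∧ (∀ x : A, h' * x = h' * piR K A Δ ε x) ∧
        piL K A Δ ε h' = 1 ∧ piR K A Δ ε h' = 1) →
      h = h') ∧
    (∀ h : A,
      ((∀ x : A, x * h = piL K A Δ ε x * h) ∧ (∀ x : A, h * x = h * piR K A Δ ε x) ∧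
        piL K A Δ ε h = 1 ∧ piR K A Δ ε h = 1) →
      (h * h = h ∧ S h = h ∧
        Function.Bijective
          (fun φ : A →ₗ[K] K => (TensorProduct.rid K A) (LinearMap.lTensor A φ (Δ h))))) := by
  classical
  refine ⟨?_, ?_, ?_⟩
  · intro l hl
    constructor
    · rintro ⟨_, _, h3⟩
      exact h3
    · intro hn
      obtain ⟨hri, hL, _, _⟩ := WHA18.master Δ ε S hA l hl hn
      exact ⟨hri, hL, hn⟩
  · rintro h h' ⟨hL, hR, hL1, hR1⟩ ⟨hL', hR', hL1', hR1'⟩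
    have e1 : h * h' = h' := by rw [hL' h, hL1, one_mul]
    have e2 : h * h' = h := by rw [hR h', hR1', mul_one]
    rw [← e2, e1]
  · rintro h ⟨hL, hR, hL1, hR1⟩
    refine ⟨?_, ?_, ?_⟩
    · rw [hR h, hR1, mul_one]
    · exact (WHA18.master Δ ε S hA h hL hR1).2.2.1
    · exact (WHA18.master Δ ε S hA h hL hR1).2.2.2
end
end
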